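/- arXiv:1508.05149 — 5 statements merged into one kernel-verified Lean document; each statement's English description precedes it below -/
import Mathlib

section
/- Let M be uniform on a finite set of size 2^{nR}, independent of S^n. Suppose Z^n is a deterministic function of (M, S^n), X_i is a deterministic function of (M, S^n) for each i, X_{r,i} is a deterministic function of Z^{i-1}, and given (X_i, X_{r,i}, S_i) the output Y_i is conditionally independent of all other variables. If H(M | Y^n, S^n) <= n*eps, then nR <= sum_{i=1}^n H(Z_i | S_i, X_{r,i}) + sum_{i=1}^n I(X_i; Y_i | Z_i, S_i, X_{r,i}) + n*eps. -/
open scoped BigOperators Classical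
open Filter

noncomputable section

/-- Probability that the random variable `f` equals `a` under the pmf `p`. -/
def prob {Ω α : Type*} [Fintype Ω] (p : Ω → ℝ) (f : Ω → α) (a : α) : ℝ :=
  ∑ ω, if f ω = a then p ω else 0

/-- `p` is a probability mass function. -/
def IsPMF {Ω : Type*} [Fintype Ω] (p : Ω → ℝ) : Prop :=
  (∀ ω, 0 ≤ p ω) ∧ ∑ ω, p ω = 1

/-- Shannon entropy (base 2). -/
def Hent {Ω α : Type*} [Fintype Ω] [Fintype α] (p : Ω → ℝ) (f : Ω → α) : ℝ :=
  - ∑ a, prob p f a * Real.logb 2 (prob p f a)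

/-- Conditional entropy H(f | g). -/
def Hcond {Ω α β : Type*} [Fintype Ω] [Fintype α] [Fintype β]
    (p : Ω → ℝ) (f : Ω → α) (g : Ω → β) : ℝ :=
  Hent p (fun ω => (f ω, g ω)) - Hent p g

/-- Mutual information I(f; g). -/
def Imut {Ω α β : Type*} [Fintype Ω] [Fintype α] [Fintype β]
    (p : Ω → ℝ) (f : Ω → α) (g : Ω → β) : ℝ :=
  Hent p f + Hent p g - Hent p (fun ω => (f ω, g ω))

/-- Conditional mutual information I(f; g | h). -/
def Icond {Ω α β γ : Type*} [Fintype Ω] [Fintype α] [Fintype β] [Fintype γ]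
    (p : Ω → ℝ) (f : Ω → α) (g : Ω → β) (h : Ω → γ) : ℝ :=
  Hcond p f h + Hcond p g h - Hcond p (fun ω => (f ω, g ω)) h

/-- Conditional independence of `f` and `g` given `h` under pmf `p`. -/
def CondIndepFun {Ω α β γ : Type*} [Fintype Ω]
    (p : Ω → ℝ) (f : Ω → α) (g : Ω → β) (h : Ω → γ) : Prop :=
  ∀ a b c, prob p (fun ω => (f ω, g ω, h ω)) (a, b, c) * prob p h c
    = prob p (fun ω => (f ω, h ω)) (a, c) * prob p (fun ω => (g ω, h ω)) (b, c)


namespace RC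
variable {Ω : Type*} [Fintype Ω] {p : Ω → ℝ}

lemma prob_nonneg (hp : IsPMF p) {α : Type*} (f : Ω → α) (a : α) : 0 ≤ prob p f a := by
  refine Finset.sum_nonneg fun ω _ => ?_
  by_cases h : f ω = a <;> simp [h, hp.1 ω]

lemma sum_prob {α : Type*} [Fintype α] (hp : IsPMF p) (f : Ω → α) : ∑ a, prob p f a = 1 := by
  unfold prob
  rw [Finset.sum_comm]
  simp only [Finset.sum_ite_eq, Finset.mem_univ, if_true]
  exact hp.2

lemma prob_comp {α β : Type*} [Fintype α] (e : α → β) (f : Ω → α) (b : β) :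
    prob p (fun ω => e (f ω)) b = ∑ a, if e a = b then prob p f a else 0 := by
  unfold prob
  symm
  calc (∑ a, if e a = b then (∑ ω, if f ω = a then p ω else 0) else 0)
      = ∑ a, ∑ ω, (if e a = b then (if f ω = a then p ω else 0) else 0) := by
        apply Finset.sum_congr rfl; intro a _
        by_cases h1 : e a = b <;> simp [h1]
    _ = ∑ ω, ∑ a, (if e a = b then (if f ω = a then p ω else 0) else 0) := Finset.sum_comm
    _ = ∑ ω, if e (f ω) = b then p ω else 0 := by
        apply Finset.sum_congr rfl; intro ω _
        calc (∑ a, if e a = b then (if f ω = a then p ω else 0) else 0)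
            = ∑ a, if f ω = a then (if e a = b then p ω else 0) else 0 := by
              apply Finset.sum_congr rfl; intro a _
              by_cases h1 : e a = b <;> by_cases h2 : f ω = a <;> simp [h1, h2]
          _ = if e (f ω) = b then p ω else 0 := by rw [Finset.sum_ite_eq]; simp

lemma prob_le_comp (hp : IsPMF p) {α β : Type*} (e : α → β) (f : Ω → α) (a : α) :
    prob p f a ≤ prob p (fun ω => e (f ω)) (e a) := by
  refine Finset.sum_le_sum fun ω _ => ?_
  by_cases h : f ω = a
  · simp [h]
  · simp only [h, if_false]
    by_cases h2 : e (f ω) = e a <;> simp [h2, hp.1 ω]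

lemma marg_fst {α γ : Type*} [Fintype α] [Fintype γ] (f : Ω → α) (h : Ω → γ) (c : γ) :
    ∑ a, prob p (fun ω => (f ω, h ω)) (a, c) = prob p h c := by
  have key : prob p (fun ω => ((f ω, h ω)).2) c
      = ∑ x : α × γ, if x.2 = c then prob p (fun ω => (f ω, h ω)) x else 0 :=
    prob_comp (fun x : α × γ => x.2) (fun ω => (f ω, h ω)) c
  have : prob p h c = ∑ x : α × γ, if x.2 = c then prob p (fun ω => (f ω, h ω)) x else 0 := key
  rw [this, Fintype.sum_prod_type]
  apply Finset.sum_congr rfl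
  intro a _
  rw [Finset.sum_ite_eq']
  simp

lemma Hent_comp_eq_sum {α β : Type*} [Fintype α] [Fintype β] (e : α → β) (f : Ω → α) :
    Hent p (fun ω => e (f ω))
      = -∑ a, prob p f a * Real.logb 2 (prob p (fun ω => e (f ω)) (e a)) := by
  unfold Hent
  congr 1
  calc ∑ b, prob p (fun ω => e (f ω)) b * Real.logb 2 (prob p (fun ω => e (f ω)) b)
      = ∑ b, ∑ a, (if e a = b then prob p f a * Real.logb 2 (prob p (fun ω => e (f ω)) b) else 0) := by
        apply Finset.sum_congr rfl; intro b _
        rw [prob_comp e f b, Finset.sum_mul]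
        apply Finset.sum_congr rfl; intro a _
        by_cases h : e a = b <;> simp [h]
    _ = ∑ a, ∑ b, (if e a = b then prob p f a * Real.logb 2 (prob p (fun ω => e (f ω)) b) else 0) :=
        Finset.sum_comm
    _ = ∑ a, prob p f a * Real.logb 2 (prob p (fun ω => e (f ω)) (e a)) := by
        apply Finset.sum_congr rfl; intro a _
        rw [Finset.sum_ite_eq]; simp

lemma Hent_comp_inj {α β : Type*} [Fintype α] [Fintype β] (e : α → β)
    (he : Function.Injective e) (f : Ω → α) :
    Hent p (fun ω => e (f ω)) = Hent p f := by
  have key : ∀ a, prob p (fun ω => e (f ω)) (e a) = prob p f a := by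
    intro a
    rw [prob_comp]
    calc (∑ a', if e a' = e a then prob p f a' else 0)
        = ∑ a', if a' = a then prob p f a' else 0 := by
          apply Finset.sum_congr rfl; intro a' _
          by_cases h : a' = a
          · simp [h]
          · have : e a' ≠ e a := fun hh => h (he hh)
            simp [h, this]
      _ = prob p f a := by rw [Finset.sum_ite_eq']; simp
  unfold Hent
  congr 1
  rw [← Finset.sum_subset (Finset.subset_univ (Finset.image e Finset.univ))]
  · rw [Finset.sum_image (fun a _ a' _ h => he h)]
    apply Finset.sum_congr rfl; intro a _; rw [key a]
  · intro b _ hb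
    have hz : prob p (fun ω => e (f ω)) b = 0 := by
      rw [prob_comp]
      apply Finset.sum_eq_zero; intro a _
      have : e a ≠ b := fun h => hb (Finset.mem_image.2 ⟨a, Finset.mem_univ a, h⟩)
      simp [this]
    simp [hz]

lemma Hent_eq_of_equiv {α β : Type*} [Fintype α] [Fintype β] (f : Ω → α) (g : Ω → β)
    (e : α → β) (d : β → α) (he : ∀ ω, g ω = e (f ω)) (hd : ∀ ω, f ω = d (g ω)) :
    Hent p f = Hent p g := by
  have h1 : Hent p (fun ω => (f ω, g ω)) = Hent p f := by
    have hfg : (fun ω => (f ω, g ω)) = fun ω => ((fun a => (a, e a)) (f ω)) := by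
      funext ω; simp [he ω]
    rw [hfg]
    exact Hent_comp_inj (fun a => (a, e a)) (fun a a' h => congrArg Prod.fst h) f
  have h2 : Hent p (fun ω => (f ω, g ω)) = Hent p g := by
    have hfg : (fun ω => (f ω, g ω)) = fun ω => ((fun b => (d b, b)) (g ω)) := by
      funext ω; rw [hd ω]
    rw [hfg]
    exact Hent_comp_inj (fun b => (d b, b)) (fun b b' h => congrArg Prod.snd h) g
  rw [← h1, h2]

lemma Hcond_congr {α β β' : Type*} [Fintype α] [Fintype β] [Fintype β']
    (f : Ω → α) (g : Ω → β) (g' : Ω → β')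
    (e : β → β') (d : β' → β) (he : ∀ ω, g' ω = e (g ω)) (hd : ∀ ω, g ω = d (g' ω)) :
    Hcond p f g = Hcond p f g' := by
  unfold Hcond
  rw [Hent_eq_of_equiv g g' e d he hd,
      Hent_eq_of_equiv (fun ω => (f ω, g ω)) (fun ω => (f ω, g' ω))
        (fun x => (x.1, e x.2)) (fun x => (x.1, d x.2))
        (fun ω => by simp [he ω]) (fun ω => by simp [← hd ω])]


lemma Hcond_sub_expand {α β γ : Type*} [Fintype α] [Fintype β] [Fintype γ]
    (f : Ω → α) (g : Ω → β) (h : Ω → γ) :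
    Hcond p f h - Hcond p f (fun ω => (g ω, h ω)) =
      ∑ t : α × β × γ, prob p (fun ω => (f ω, g ω, h ω)) t *
        (Real.logb 2 (prob p (fun ω => (f ω, g ω, h ω)) t)
          + Real.logb 2 (prob p h t.2.2)
          - Real.logb 2 (prob p (fun ω => (f ω, h ω)) (t.1, t.2.2))
          - Real.logb 2 (prob p (fun ω => (g ω, h ω)) t.2)) := by
  have e123 : Hent p (fun ω => (f ω, (g ω, h ω)))
      = -∑ t : α × β × γ, prob p (fun ω => (f ω, g ω, h ω)) t *
          Real.logb 2 (prob p (fun ω => (f ω, g ω, h ω)) t) :=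
    Hent_comp_eq_sum id (fun ω => (f ω, g ω, h ω))
  have e3 : Hent p h
      = -∑ t : α × β × γ, prob p (fun ω => (f ω, g ω, h ω)) t *
          Real.logb 2 (prob p h t.2.2) :=
    Hent_comp_eq_sum (fun t : α × β × γ => t.2.2) (fun ω => (f ω, g ω, h ω))
  have e13 : Hent p (fun ω => (f ω, h ω))
      = -∑ t : α × β × γ, prob p (fun ω => (f ω, g ω, h ω)) t *
          Real.logb 2 (prob p (fun ω => (f ω, h ω)) (t.1, t.2.2)) :=
    Hent_comp_eq_sum (fun t : α × β × γ => (t.1, t.2.2)) (fun ω => (f ω, g ω, h ω))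
  have e23 : Hent p (fun ω => (g ω, h ω))
      = -∑ t : α × β × γ, prob p (fun ω => (f ω, g ω, h ω)) t *
          Real.logb 2 (prob p (fun ω => (g ω, h ω)) t.2) :=
    Hent_comp_eq_sum (fun t : α × β × γ => t.2) (fun ω => (f ω, g ω, h ω))
  unfold Hcond
  rw [e123, e3, e13, e23]
  simp only [mul_add, mul_sub, Finset.sum_add_distrib, Finset.sum_sub_distrib]
  ring

lemma log_two_pos : (0:ℝ) < Real.log 2 := Real.log_pos one_lt_two

lemma Hcond_pair_le {α β γ : Type*} [Fintype α] [Fintype β] [Fintype γ] (hp : IsPMF p)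
    (f : Ω → α) (g : Ω → β) (h : Ω → γ) :
    Hcond p f (fun ω => (g ω, h ω)) ≤ Hcond p f h := by
  rw [← sub_nonneg, Hcond_sub_expand]
  set T : α × β × γ → ℝ := prob p (fun ω => (f ω, g ω, h ω)) with hT
  set q : α × β × γ → ℝ := fun t =>
    prob p (fun ω => (f ω, h ω)) (t.1, t.2.2) * prob p (fun ω => (g ω, h ω)) t.2
      / prob p h t.2.2 with hq
  have hTnn : ∀ t, 0 ≤ T t := fun t => prob_nonneg hp _ t
  have hqnn : ∀ t, 0 ≤ q t := fun t => div_nonneg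
    (mul_nonneg (prob_nonneg hp _ _) (prob_nonneg hp _ _)) (prob_nonneg hp _ _)
  have hT13 : ∀ t : α × β × γ, T t ≤ prob p (fun ω => (f ω, h ω)) (t.1, t.2.2) := fun t =>
    prob_le_comp hp (fun t : α × β × γ => (t.1, t.2.2)) (fun ω => (f ω, g ω, h ω)) t
  have hT23 : ∀ t : α × β × γ, T t ≤ prob p (fun ω => (g ω, h ω)) t.2 := fun t =>
    prob_le_comp hp (fun t : α × β × γ => t.2) (fun ω => (f ω, g ω, h ω)) t
  have hT3 : ∀ t : α × β × γ, T t ≤ prob p h t.2.2 := fun t =>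
    prob_le_comp hp (fun t : α × β × γ => t.2.2) (fun ω => (f ω, g ω, h ω)) t
  have key : ∀ t, (T t - q t) / Real.log 2 ≤ T t *
      (Real.logb 2 (T t) + Real.logb 2 (prob p h t.2.2)
        - Real.logb 2 (prob p (fun ω => (f ω, h ω)) (t.1, t.2.2))
        - Real.logb 2 (prob p (fun ω => (g ω, h ω)) t.2)) := by
    intro t
    by_cases hTz : T t = 0
    · rw [hTz]
      simp only [zero_mul, zero_sub]
      exact div_nonpos_of_nonpos_of_nonneg (by linarith [hqnn t]) (le_of_lt log_two_pos)
    · have hTp : 0 < T t := lt_of_le_of_ne (hTnn t) (Ne.symm hTz)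
      have h13 : 0 < prob p (fun ω => (f ω, h ω)) (t.1, t.2.2) := lt_of_lt_of_le hTp (hT13 t)
      have h23 : 0 < prob p (fun ω => (g ω, h ω)) t.2 := lt_of_lt_of_le hTp (hT23 t)
      have h3 : 0 < prob p h t.2.2 := lt_of_lt_of_le hTp (hT3 t)
      have hqp : 0 < q t := div_pos (mul_pos h13 h23) h3
      have hlog : Real.log (q t / T t) ≤ q t / T t - 1 :=
        Real.log_le_sub_one_of_pos (div_pos hqp hTp)
      have hmul : T t * Real.log (q t / T t) ≤ q t - T t := by
        calc T t * Real.log (q t / T t) ≤ T t * (q t / T t - 1) :=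
              mul_le_mul_of_nonneg_left hlog (le_of_lt hTp)
          _ = q t - T t := by field_simp
      have hexpand : Real.log (q t / T t)
          = Real.log (prob p (fun ω => (f ω, h ω)) (t.1, t.2.2))
            + Real.log (prob p (fun ω => (g ω, h ω)) t.2)
            - Real.log (prob p h t.2.2) - Real.log (T t) := by
        rw [hq]
        simp only []
        rw [Real.log_div (by positivity) hTz, Real.log_div (by positivity) (ne_of_gt h3),
            Real.log_mul (ne_of_gt h13) (ne_of_gt h23)]
      have hrhs : T t *
          (Real.logb 2 (T t) + Real.logb 2 (prob p h t.2.2)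
            - Real.logb 2 (prob p (fun ω => (f ω, h ω)) (t.1, t.2.2))
            - Real.logb 2 (prob p (fun ω => (g ω, h ω)) t.2))
          = -(T t * Real.log (q t / T t)) / Real.log 2 := by
        simp only [Real.logb]
        rw [hexpand]
        ring
      rw [hrhs, div_le_div_iff_of_pos_right log_two_pos]
      linarith
  have hTsum : ∑ t, T t = 1 := sum_prob hp _
  have hqsum : ∑ t : α × β × γ, q t ≤ 1 := by
    have hq3 : ∑ t : α × β × γ, q t
        = ∑ c : γ, (∑ a : α, prob p (fun ω => (f ω, h ω)) (a, c))
            * (∑ b : β, prob p (fun ω => (g ω, h ω)) (b, c)) / prob p h c := by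
      rw [Fintype.sum_prod_type]
      have swap : ∀ a : α, ∑ t2 : β × γ, q (a, t2)
          = ∑ c : γ, ∑ b : β, q (a, b, c) := by
        intro a
        rw [Fintype.sum_prod_type]
        exact Finset.sum_comm
      rw [Finset.sum_congr rfl (fun a _ => swap a), Finset.sum_comm]
      apply Finset.sum_congr rfl
      intro c _
      rw [Finset.sum_mul_sum, Finset.sum_div]
      apply Finset.sum_congr rfl
      intro a _
      rw [Finset.sum_div]
    rw [hq3]
    have : ∀ c : γ, (∑ a : α, prob p (fun ω => (f ω, h ω)) (a, c))
            * (∑ b : β, prob p (fun ω => (g ω, h ω)) (b, c)) / prob p h c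
        = prob p h c * prob p h c / prob p h c := by
      intro c
      rw [marg_fst f h c, marg_fst g h c]
    rw [Finset.sum_congr rfl (fun c _ => this c)]
    calc ∑ c : γ, prob p h c * prob p h c / prob p h c ≤ ∑ c : γ, prob p h c := by
          apply Finset.sum_le_sum
          intro c _
          by_cases hc : prob p h c = 0
          · rw [hc]; simp
          · rw [mul_div_assoc, div_self hc, mul_one]
      _ = 1 := sum_prob hp h
  calc (0:ℝ) ≤ ∑ t : α × β × γ, (T t - q t) / Real.log 2 := by
        rw [← Finset.sum_div, Finset.sum_sub_distrib, hTsum]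
        exact div_nonneg (by linarith) (le_of_lt log_two_pos)
    _ ≤ _ := Finset.sum_le_sum (fun t _ => key t)


lemma Hcond_nonneg {α β : Type*} [Fintype α] [Fintype β] (hp : IsPMF p)
    (f : Ω → α) (g : Ω → β) : 0 ≤ Hcond p f g := by
  have e12 : Hent p (fun ω => (f ω, g ω))
      = -∑ d : α × β, prob p (fun ω => (f ω, g ω)) d *
          Real.logb 2 (prob p (fun ω => (f ω, g ω)) d) :=
    Hent_comp_eq_sum id (fun ω => (f ω, g ω))
  have e2 : Hent p g
      = -∑ d : α × β, prob p (fun ω => (f ω, g ω)) d * Real.logb 2 (prob p g d.2) :=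
    Hent_comp_eq_sum (fun d : α × β => d.2) (fun ω => (f ω, g ω))
  unfold Hcond
  rw [e12, e2, neg_sub_neg, ← Finset.sum_sub_distrib]
  apply Finset.sum_nonneg
  intro d _
  rw [← mul_sub]
  by_cases hD : prob p (fun ω => (f ω, g ω)) d = 0
  · rw [hD]; simp
  · have hDp : 0 < prob p (fun ω => (f ω, g ω)) d :=
      lt_of_le_of_ne (prob_nonneg hp _ _) (Ne.symm hD)
    have hle : prob p (fun ω => (f ω, g ω)) d ≤ prob p g d.2 := by
      have := prob_le_comp hp (fun d : α × β => d.2) (fun ω => (f ω, g ω)) d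
      exact this
    apply mul_nonneg (le_of_lt hDp)
    rw [sub_nonneg]
    exact Real.logb_le_logb_of_le one_lt_two hDp hle

lemma Hcond_eq_of_condIndep {α β γ : Type*} [Fintype α] [Fintype β] [Fintype γ] (hp : IsPMF p)
    (f : Ω → α) (g : Ω → β) (h : Ω → γ)
    (hci : ∀ a b c, prob p (fun ω => (f ω, g ω, h ω)) (a, b, c) * prob p h c
      = prob p (fun ω => (f ω, h ω)) (a, c) * prob p (fun ω => (g ω, h ω)) (b, c)) :
    Hcond p f (fun ω => (g ω, h ω)) = Hcond p f h := by
  have hzero : Hcond p f h - Hcond p f (fun ω => (g ω, h ω)) = 0 := by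
    rw [Hcond_sub_expand]
    apply Finset.sum_eq_zero
    intro t _
    by_cases hTz : prob p (fun ω => (f ω, g ω, h ω)) t = 0
    · rw [hTz]; ring
    · have hTp : 0 < prob p (fun ω => (f ω, g ω, h ω)) t :=
        lt_of_le_of_ne (prob_nonneg hp _ _) (Ne.symm hTz)
      have h13 : 0 < prob p (fun ω => (f ω, h ω)) (t.1, t.2.2) :=
        lt_of_lt_of_le hTp (prob_le_comp hp (fun t : α × β × γ => (t.1, t.2.2)) _ t)
      have h23 : 0 < prob p (fun ω => (g ω, h ω)) t.2 :=
        lt_of_lt_of_le hTp (prob_le_comp hp (fun t : α × β × γ => t.2) _ t)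
      have h3 : 0 < prob p h t.2.2 :=
        lt_of_lt_of_le hTp (prob_le_comp hp (fun t : α × β × γ => t.2.2) _ t)
      have hprod : prob p (fun ω => (f ω, g ω, h ω)) t * prob p h t.2.2
          = prob p (fun ω => (f ω, h ω)) (t.1, t.2.2) * prob p (fun ω => (g ω, h ω)) t.2 :=
        hci t.1 t.2.1 t.2.2
      have hlogeq : Real.logb 2 (prob p (fun ω => (f ω, g ω, h ω)) t)
            + Real.logb 2 (prob p h t.2.2)
          = Real.logb 2 (prob p (fun ω => (f ω, h ω)) (t.1, t.2.2))
            + Real.logb 2 (prob p (fun ω => (g ω, h ω)) t.2) := by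
        rw [← Real.logb_mul hTz (ne_of_gt h3), hprod,
            Real.logb_mul (ne_of_gt h13) (ne_of_gt h23)]
      have : Real.logb 2 (prob p (fun ω => (f ω, g ω, h ω)) t)
            + Real.logb 2 (prob p h t.2.2)
            - Real.logb 2 (prob p (fun ω => (f ω, h ω)) (t.1, t.2.2))
            - Real.logb 2 (prob p (fun ω => (g ω, h ω)) t.2) = 0 := by linarith
      rw [this, mul_zero]
  linarith

lemma Hcond_mono {α β γ : Type*} [Fintype α] [Fintype β] [Fintype γ] (hp : IsPMF p)
    (f : Ω → α) (g : Ω → β) (k : Ω → γ)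
    (e : β → γ) (hk : ∀ ω, k ω = e (g ω)) : Hcond p f g ≤ Hcond p f k := by
  have h1 : Hcond p f g = Hcond p f (fun ω => (g ω, k ω)) :=
    Hcond_congr f g _ (fun b => (b, e b)) Prod.fst (fun ω => by simp [hk ω]) (fun ω => rfl)
  rw [h1]
  exact Hcond_pair_le hp f g k

lemma Icond_eq {α β γ : Type*} [Fintype α] [Fintype β] [Fintype γ]
    (f : Ω → α) (g : Ω → β) (h : Ω → γ) :
    Icond p f g h = Hcond p g h - Hcond p g (fun ω => (f ω, h ω)) := by
  simp only [Icond, Hcond]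
  rw [Hent_eq_of_equiv (fun ω => ((f ω, g ω), h ω)) (fun ω => (g ω, (f ω, h ω)))
      (fun x => (x.1.2, (x.1.1, x.2))) (fun x => ((x.2.1, x.1), x.2.2))
      (fun ω => rfl) (fun ω => rfl)]
  ring

lemma mutual_symm {α β γ : Type*} [Fintype α] [Fintype β] [Fintype γ]
    (f : Ω → α) (g : Ω → β) (w : Ω → γ) :
    Hcond p f w - Hcond p f (fun ω => (g ω, w ω))
      = Hcond p g w - Hcond p g (fun ω => (f ω, w ω)) := by
  simp only [Hcond]
  rw [Hent_eq_of_equiv (fun ω => (f ω, (g ω, w ω))) (fun ω => (g ω, (f ω, w ω)))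
      (fun x => (x.2.1, (x.1, x.2.2))) (fun x => (x.2.1, (x.1, x.2.2)))
      (fun ω => rfl) (fun ω => rfl)]
  ring

lemma Hent_pair_of_indep {α β : Type*} [Fintype α] [Fintype β] (hp : IsPMF p)
    (f : Ω → α) (g : Ω → β)
    (hind : ∀ a b, prob p (fun ω => (f ω, g ω)) (a, b) = prob p f a * prob p g b) :
    Hent p (fun ω => (f ω, g ω)) = Hent p f + Hent p g := by
  unfold Hent
  rw [Fintype.sum_prod_type]
  have per : ∀ a, ∑ b, prob p (fun ω => (f ω, g ω)) (a, b) *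
        Real.logb 2 (prob p (fun ω => (f ω, g ω)) (a, b))
      = ∑ b, (prob p f a * Real.logb 2 (prob p f a) * prob p g b
          + prob p f a * (prob p g b * Real.logb 2 (prob p g b))) := by
    intro a
    apply Finset.sum_congr rfl
    intro b _
    rw [hind a b]
    by_cases ha : prob p f a = 0
    · simp [ha]
    · by_cases hb : prob p g b = 0
      · simp [hb]
      · rw [Real.logb_mul ha hb]; ring
  rw [Finset.sum_congr rfl (fun a _ => per a)]
  have split : ∀ a, ∑ b, (prob p f a * Real.logb 2 (prob p f a) * prob p g b
          + prob p f a * (prob p g b * Real.logb 2 (prob p g b)))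
      = prob p f a * Real.logb 2 (prob p f a)
        + prob p f a * (∑ b, prob p g b * Real.logb 2 (prob p g b)) := by
    intro a
    rw [Finset.sum_add_distrib, ← Finset.mul_sum, ← Finset.mul_sum, sum_prob hp g, mul_one]
  rw [Finset.sum_congr rfl (fun a _ => split a), Finset.sum_add_distrib,
      ← Finset.sum_mul, sum_prob hp f, one_mul]
  ring

lemma Hent_uniform {α : Type*} [Fintype α] (f : Ω → α) (K : ℝ) (hK : 0 < K)
    (hu : ∀ a, prob p f a = 1 / K) (hcardK : (Fintype.card α : ℝ) = K) :
    Hent p f = Real.logb 2 K := by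
  unfold Hent
  rw [Finset.sum_congr rfl (fun a _ => by rw [hu a])]
  rw [Finset.sum_const, Finset.card_univ, nsmul_eq_mul, hcardK, one_div, Real.logb_inv]
  rw [mul_neg, mul_neg, neg_neg, ← mul_assoc, mul_inv_cancel₀ (ne_of_gt hK), one_mul]


def pre {𝒱 : Type*} {n : ℕ} (V : Fin n → Ω → 𝒱) (k : ℕ) (ω : Ω) :
    {j : Fin n // j.val < k} → 𝒱 :=
  fun j => V j.1 ω

lemma Hcond_chain {n : ℕ} {𝒱 κ : Type*} [Fintype 𝒱] [Fintype κ]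
    (V : Fin n → Ω → 𝒱) (W : Ω → κ) :
    Hcond p (fun ω (i : Fin n) => V i ω) W
      = ∑ i : Fin n, Hcond p (V i) (fun ω => (pre V i.val ω, W ω)) := by
  have main : ∀ m, m ≤ n → Hent p (fun ω => (pre V m ω, W ω))
      = Hent p W + ∑ i : Fin n,
          (if i.val < m then Hcond p (V i) (fun ω => (pre V i.val ω, W ω)) else 0) := by
    intro m
    induction m with
    | zero =>
      intro _
      have h0 : Hent p (fun ω => (pre V 0 ω, W ω)) = Hent p W :=
        Hent_eq_of_equiv (fun ω => (pre V 0 ω, W ω)) W Prod.snd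
          (fun w => (fun j => absurd j.2 (Nat.not_lt_zero _), w))
          (fun ω => rfl)
          (fun ω => by
            have hfe : pre V 0 ω = (fun j : {j : Fin n // j.val < 0} =>
                absurd j.2 (Nat.not_lt_zero _)) :=
              funext fun j => absurd j.2 (Nat.not_lt_zero _)
            simp only [hfe])
      rw [h0]
      simp
    | succ k ih =>
      intro hk1
      have hk : k < n := Nat.lt_of_lt_of_le (Nat.lt_succ_self k) hk1
      have ihk := ih (Nat.le_of_succ_le hk1)
      have hstep : Hent p (fun ω => (pre V (k+1) ω, W ω))
          = Hent p (fun ω => (V ⟨k, hk⟩ ω, (pre V k ω, W ω))) := by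
        symm
        refine Hent_eq_of_equiv _ _
          (fun x : 𝒱 × (({j : Fin n // j.val < k} → 𝒱) × κ) =>
            ((fun j : {j : Fin n // j.val < k+1} =>
              if hj : j.1.val < k then x.2.1 ⟨j.1, hj⟩ else x.1), x.2.2))
          (fun y : ({j : Fin n // j.val < k+1} → 𝒱) × κ =>
            (y.1 ⟨⟨k, hk⟩, Nat.lt_succ_self k⟩,
              ((fun j : {j : Fin n // j.val < k} => y.1 ⟨j.1, Nat.lt_succ_of_lt j.2⟩), y.2)))
          (fun ω => ?_) (fun ω => rfl)
        have hfe : pre V (k+1) ω = (fun j : {j : Fin n // j.val < k+1} =>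
            if hj : j.1.val < k then pre V k ω ⟨j.1, hj⟩ else V ⟨k, hk⟩ ω) := by
          funext j
          by_cases hj : j.1.val < k
          · simp only [dif_pos hj]
            rfl
          · simp only [dif_neg hj]
            have hjk : j.1 = ⟨k, hk⟩ := by
              apply Fin.ext
              show j.1.val = k
              have hj2 := j.2
              omega
            show V j.1 ω = V ⟨k, hk⟩ ω
            rw [hjk]
        rw [hfe]
      rw [hstep]
      have hsplit : Hent p (fun ω => (V ⟨k, hk⟩ ω, (pre V k ω, W ω)))
          = Hcond p (V ⟨k, hk⟩) (fun ω => (pre V k ω, W ω))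
            + Hent p (fun ω => (pre V k ω, W ω)) := by
        unfold Hcond; ring
      rw [hsplit, ihk]
      have hpt : ∀ i : Fin n,
          (if i.val < k+1 then Hcond p (V i) (fun ω => (pre V i.val ω, W ω)) else 0)
          = (if i.val < k then Hcond p (V i) (fun ω => (pre V i.val ω, W ω)) else 0)
            + (if i = ⟨k, hk⟩ then Hcond p (V i) (fun ω => (pre V i.val ω, W ω)) else 0) := by
        intro i
        by_cases h1 : i.val < k
        · have h2 : i.val < k+1 := Nat.lt_succ_of_lt h1
          have h3 : i ≠ ⟨k, hk⟩ := by
            intro hh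
            rw [hh] at h1
            exact absurd h1 (lt_irrefl k)
          simp [h1, h2, h3]
        · by_cases h4 : i = ⟨k, hk⟩
          · have h5 : i.val < k+1 := by rw [h4]; exact Nat.lt_succ_self k
            simp [h1, h4, h5]
          · have h6 : ¬ i.val < k+1 := by
              intro hc
              refine h4 (Fin.ext ?_)
              show i.val = k
              omega
            simp [h1, h4, h6]
      rw [Finset.sum_congr rfl (fun i _ => hpt i), Finset.sum_add_distrib,
          Finset.sum_ite_eq' Finset.univ (⟨k, hk⟩ : Fin n)]
      simp only [Finset.mem_univ, if_true]
      ring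
  have top := main n (le_refl n)
  have hfull : Hent p (fun ω => ((fun i : Fin n => V i ω), W ω))
      = Hent p (fun ω => (pre V n ω, W ω)) :=
    Hent_eq_of_equiv _ _
      (fun x : (Fin n → 𝒱) × κ => ((fun j : {j : Fin n // j.val < n} => x.1 j.1), x.2))
      (fun y => ((fun i : Fin n => y.1 ⟨i, i.isLt⟩), y.2))
      (fun ω => rfl) (fun ω => rfl)
  show Hent p (fun ω => ((fun i : Fin n => V i ω), W ω)) - Hent p W = _
  rw [hfull, top]
  rw [Finset.sum_congr rfl (fun i (_ : i ∈ Finset.univ) => if_pos i.isLt)]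
  ring

end RC

/-- Converse single-letterization for the state-dependent semideterministic relay
channel (Theorem 2, first bound): if `M` is uniform on a message set of size
`2^{nR}`, independent of the i.i.d. state sequence `S^n`; `Z_i` and `X_i` are
functions of `(M, S^n)`; `X_{r,i}` is a function of `Z^{i-1}`; the channel is
memoryless (`Y_i ⫫ (M, S^n, Y^{i-1}) | (X_i, X_{r,i}, S_i)`); and Fano's bound
`H(M | Y^n, S^n) ≤ n·ε` holds, then
`nR ≤ ∑ H(Z_i|S_i,X_{r,i}) + ∑ I(X_i;Y_i|Z_i,S_i,X_{r,i}) + n·ε`. -/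
theorem relay_converse_bound_one
    {Ω 𝕄 𝒮 𝒳 𝒳r 𝒵 𝒴 : Type*} [Fintype Ω] [Fintype 𝕄] [Fintype 𝒮]
    [Fintype 𝒳] [Fintype 𝒳r] [Fintype 𝒵] [Fintype 𝒴]
    (p : Ω → ℝ) (hp : IsPMF p) (n : ℕ) (hn : 0 < n) (R eps : ℝ)
    (M : Ω → 𝕄) (S : Fin n → Ω → 𝒮) (X : Fin n → Ω → 𝒳)
    (Xr : Fin n → Ω → 𝒳r) (Z : Fin n → Ω → 𝒵) (Y : Fin n → Ω → 𝒴)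
    (hcard : (Fintype.card 𝕄 : ℝ) = 2 ^ ((n : ℝ) * R))
    (hMuniform : ∀ m, prob p M m = 1 / Fintype.card 𝕄)
    (hMindepS : ∀ m sv, prob p (fun ω => (M ω, fun i => S i ω)) (m, sv)
        = prob p M m * prob p (fun ω i => S i ω) sv)
    (hiid : ∃ q : 𝒮 → ℝ, (∀ s, 0 ≤ q s) ∧ (∑ s, q s = 1) ∧
        ∀ sv : Fin n → 𝒮, prob p (fun ω i => S i ω) sv = ∏ i, q (sv i))
    (hZ : ∀ i : Fin n, ∃ f : 𝕄 → (Fin n → 𝒮) → 𝒵, ∀ ω, Z i ω = f (M ω) (fun j => S j ω))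
    (hX : ∀ i : Fin n, ∃ f : 𝕄 → (Fin n → 𝒮) → 𝒳, ∀ ω, X i ω = f (M ω) (fun j => S j ω))
    (hXr : ∀ i : Fin n, ∃ f : ({j : Fin n // j < i} → 𝒵) → 𝒳r,
        ∀ ω, Xr i ω = f (fun j => Z j.1 ω))
    (hmem : ∀ i : Fin n, CondIndepFun p (Y i)
        (fun ω => (M ω, fun j => S j ω, fun j : {j : Fin n // j < i} => Y j.1 ω))
        (fun ω => (X i ω, Xr i ω, S i ω)))
    (hFano : Hcond p M (fun ω => (fun i => Y i ω, fun i => S i ω)) ≤ n * eps) :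
    (n : ℝ) * R ≤ (∑ i, Hcond p (Z i) (fun ω => (S i ω, Xr i ω)))
      + (∑ i, Icond p (X i) (Y i) (fun ω => (Z i ω, S i ω, Xr i ω))) + n * eps := by
  classical
  choose fZ hfZ using hZ
  choose fX hfX using hX
  choose fXr hfXr using hXr
  -- Step 1: nR = H(M)
  have hKpos : (0:ℝ) < (Fintype.card 𝕄 : ℝ) := by
    rw [hcard]; exact Real.rpow_pos_of_pos two_pos _
  have hHM : Hent p M = (n:ℝ) * R := by
    have h1 : Hent p M = Real.logb 2 (Fintype.card 𝕄 : ℝ) :=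
      RC.Hent_uniform M _ hKpos hMuniform rfl
    rw [h1, hcard]
    exact Real.logb_rpow (by norm_num) (by norm_num)
  -- Step 2: H(M) = H(M | S^n)
  have hindep : Hent p (fun ω => (M ω, fun i => S i ω))
      = Hent p M + Hent p (fun ω (i : Fin n) => S i ω) :=
    RC.Hent_pair_of_indep hp M (fun ω (i : Fin n) => S i ω) (fun m sv => hMindepS m sv)
  have hMcond : Hcond p M (fun ω (i : Fin n) => S i ω) = Hent p M := by
    show Hent p (fun ω => (M ω, fun i => S i ω)) - Hent p (fun ω (i : Fin n) => S i ω)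
        = Hent p M
    rw [hindep]; ring
  -- abbreviations (written verbatim everywhere)
  -- Svec := fun ω (i : Fin n) => S i ω ; Yvec, Zvec similar
  -- YS := fun ω => (fun i => Y i ω, fun i => S i ω)
  -- ZS := fun ω => (fun i => Z i ω, fun i => S i ω)
  -- MS := fun ω => (M ω, fun i => S i ω)
  -- Step (a): H(M|S) = H(Z|S) + H(M|Z,S)
  have hEqA : Hent p (fun ω => (M ω, fun i => S i ω))
      = Hent p (fun ω => ((M ω, fun i => Z i ω), fun i => S i ω)) :=
    RC.Hent_eq_of_equiv _ _
      (fun x : 𝕄 × (Fin n → 𝒮) => ((x.1, fun i => fZ i x.1 x.2), x.2))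
      (fun y : (𝕄 × (Fin n → 𝒵)) × (Fin n → 𝒮) => (y.1.1, y.2))
      (fun ω => by
        show ((M ω, fun i => Z i ω), fun i => S i ω)
            = ((M ω, fun i => fZ i (M ω) (fun j => S j ω)), fun i => S i ω)
        have hz : (fun i => Z i ω) = fun i => fZ i (M ω) (fun j => S j ω) :=
          funext fun i => hfZ i ω
        rw [hz])
      (fun ω => rfl)
  have hEqA2 : Hent p (fun ω => ((M ω, fun i => Z i ω), fun i => S i ω))
      = Hent p (fun ω => (M ω, ((fun i => Z i ω), fun i => S i ω))) :=
    RC.Hent_eq_of_equiv _ _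
      (fun x : (𝕄 × (Fin n → 𝒵)) × (Fin n → 𝒮) => (x.1.1, (x.1.2, x.2)))
      (fun y : 𝕄 × ((Fin n → 𝒵) × (Fin n → 𝒮)) => ((y.1, y.2.1), y.2.2))
      (fun ω => rfl) (fun ω => rfl)
  have hA : Hcond p M (fun ω (i : Fin n) => S i ω)
      = Hcond p (fun ω (i : Fin n) => Z i ω) (fun ω (i : Fin n) => S i ω)
        + Hcond p M (fun ω => ((fun i => Z i ω), fun i => S i ω)) := by
    show Hent p (fun ω => (M ω, fun i => S i ω)) - Hent p (fun ω (i : Fin n) => S i ω)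
        = (Hent p (fun ω => ((fun i => Z i ω), fun i => S i ω))
            - Hent p (fun ω (i : Fin n) => S i ω))
          + (Hent p (fun ω => (M ω, ((fun i => Z i ω), fun i => S i ω)))
            - Hent p (fun ω => ((fun i => Z i ω), fun i => S i ω)))
    rw [hEqA, hEqA2]; ring
  -- Step (b): H(M|Y,S) ≥ H(M | Z,(Y,S))
  have hEqB : Hent p (fun ω => (M ω, ((fun i => Y i ω), fun i => S i ω)))
      = Hent p (fun ω => ((M ω, fun i => Z i ω), ((fun i => Y i ω), fun i => S i ω))) :=
    RC.Hent_eq_of_equiv _ _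
      (fun x : 𝕄 × ((Fin n → 𝒴) × (Fin n → 𝒮)) => ((x.1, fun i => fZ i x.1 x.2.2), x.2))
      (fun y : (𝕄 × (Fin n → 𝒵)) × ((Fin n → 𝒴) × (Fin n → 𝒮)) => (y.1.1, y.2))
      (fun ω => by
        show ((M ω, fun i => Z i ω), ((fun i => Y i ω), fun i => S i ω))
            = ((M ω, fun i => fZ i (M ω) (fun j => S j ω)), ((fun i => Y i ω), fun i => S i ω))
        have hz : (fun i => Z i ω) = fun i => fZ i (M ω) (fun j => S j ω) :=
          funext fun i => hfZ i ω
        rw [hz])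
      (fun ω => rfl)
  have hEqB2 : Hent p (fun ω => ((M ω, fun i => Z i ω), ((fun i => Y i ω), fun i => S i ω)))
      = Hent p (fun ω => (M ω, ((fun i => Z i ω), ((fun i => Y i ω), fun i => S i ω)))) :=
    RC.Hent_eq_of_equiv _ _
      (fun x : (𝕄 × (Fin n → 𝒵)) × ((Fin n → 𝒴) × (Fin n → 𝒮)) => (x.1.1, (x.1.2, x.2)))
      (fun y : 𝕄 × ((Fin n → 𝒵) × ((Fin n → 𝒴) × (Fin n → 𝒮))) => ((y.1, y.2.1), y.2.2))
      (fun ω => rfl) (fun ω => rfl)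
  have hB : Hcond p M (fun ω => ((fun i => Y i ω), fun i => S i ω))
      = Hcond p (fun ω (i : Fin n) => Z i ω) (fun ω => ((fun i => Y i ω), fun i => S i ω))
        + Hcond p M (fun ω => ((fun i => Z i ω), ((fun i => Y i ω), fun i => S i ω))) := by
    show Hent p (fun ω => (M ω, ((fun i => Y i ω), fun i => S i ω)))
          - Hent p (fun ω => ((fun i => Y i ω), fun i => S i ω))
        = (Hent p (fun ω => ((fun i => Z i ω), ((fun i => Y i ω), fun i => S i ω)))
            - Hent p (fun ω => ((fun i => Y i ω), fun i => S i ω)))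
          + (Hent p (fun ω => (M ω, ((fun i => Z i ω), ((fun i => Y i ω), fun i => S i ω))))
            - Hent p (fun ω => ((fun i => Z i ω), ((fun i => Y i ω), fun i => S i ω))))
    rw [hEqB, hEqB2]; ring
  have hBnn : 0 ≤ Hcond p (fun ω (i : Fin n) => Z i ω)
      (fun ω => ((fun i => Y i ω), fun i => S i ω)) :=
    RC.Hcond_nonneg hp _ _
  -- Step (d): regroup (Z,(Y,S)) ≃ (Y,(Z,S))
  have hD : Hcond p M (fun ω => ((fun i => Z i ω), ((fun i => Y i ω), fun i => S i ω)))
      = Hcond p M (fun ω => ((fun i => Y i ω), ((fun i => Z i ω), fun i => S i ω))) :=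
    RC.Hcond_congr M _ _
      (fun x : (Fin n → 𝒵) × ((Fin n → 𝒴) × (Fin n → 𝒮)) => (x.2.1, (x.1, x.2.2)))
      (fun y : (Fin n → 𝒴) × ((Fin n → 𝒵) × (Fin n → 𝒮)) => (y.2.1, (y.1, y.2.2)))
      (fun ω => rfl) (fun ω => rfl)
  -- Step (e): symmetry of mutual information
  have hSym : Hcond p M (fun ω => ((fun i => Z i ω), fun i => S i ω))
        - Hcond p M (fun ω => ((fun i => Y i ω), ((fun i => Z i ω), fun i => S i ω)))
      = Hcond p (fun ω (i : Fin n) => Y i ω) (fun ω => ((fun i => Z i ω), fun i => S i ω))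
        - Hcond p (fun ω (i : Fin n) => Y i ω)
            (fun ω => (M ω, ((fun i => Z i ω), fun i => S i ω))) :=
    RC.mutual_symm M (fun ω (i : Fin n) => Y i ω)
      (fun ω => ((fun i => Z i ω), fun i => S i ω))
  -- Step (f): H(Y | M, Z, S) = H(Y | M, S)
  have hF : Hcond p (fun ω (i : Fin n) => Y i ω)
        (fun ω => (M ω, ((fun i => Z i ω), fun i => S i ω)))
      = Hcond p (fun ω (i : Fin n) => Y i ω) (fun ω => (M ω, fun i => S i ω)) :=
    RC.Hcond_congr _ _ _
      (fun x : 𝕄 × ((Fin n → 𝒵) × (Fin n → 𝒮)) => (x.1, x.2.2))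
      (fun y : 𝕄 × (Fin n → 𝒮) => (y.1, ((fun i => fZ i y.1 y.2), y.2)))
      (fun ω => rfl)
      (fun ω => by
        show (M ω, ((fun i => Z i ω), fun i => S i ω))
            = (M ω, ((fun i => fZ i (M ω) (fun j => S j ω)), fun i => S i ω))
        have hz : (fun i => Z i ω) = fun i => fZ i (M ω) (fun j => S j ω) :=
          funext fun i => hfZ i ω
        rw [hz])
  -- chain rules
  have hchZ : Hcond p (fun ω (i : Fin n) => Z i ω) (fun ω (i : Fin n) => S i ω)
      = ∑ i : Fin n, Hcond p (Z i) (fun ω => (RC.pre Z i.val ω, fun j => S j ω)) :=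
    RC.Hcond_chain Z (fun ω (i : Fin n) => S i ω)
  have hchY1 : Hcond p (fun ω (i : Fin n) => Y i ω)
        (fun ω => ((fun i => Z i ω), fun i => S i ω))
      = ∑ i : Fin n, Hcond p (Y i)
          (fun ω => (RC.pre Y i.val ω, ((fun j => Z j ω), fun j => S j ω))) :=
    RC.Hcond_chain Y (fun ω => ((fun i => Z i ω), fun i => S i ω))
  have hchY2 : Hcond p (fun ω (i : Fin n) => Y i ω) (fun ω => (M ω, fun i => S i ω))
      = ∑ i : Fin n, Hcond p (Y i)
          (fun ω => (RC.pre Y i.val ω, (M ω, fun j => S j ω))) :=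
    RC.Hcond_chain Y (fun ω => (M ω, fun i => S i ω))
  -- per-i bound for Z terms
  have hZi : ∀ i : Fin n, Hcond p (Z i) (fun ω => (RC.pre Z i.val ω, fun j => S j ω))
      ≤ Hcond p (Z i) (fun ω => (S i ω, Xr i ω)) := by
    intro i
    refine RC.Hcond_mono hp (Z i) _ _
      (fun x : ({j : Fin n // j.val < i.val} → 𝒵) × (Fin n → 𝒮) =>
        (x.2 i, fXr i (fun j => x.1 ⟨j.1, j.2⟩))) (fun ω => ?_)
    show (S i ω, Xr i ω) = (S i ω, fXr i (fun j : {j : Fin n // j < i} => Z j.1 ω))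
    rw [hfXr i ω]
  -- per-i bounds for Y terms
  have hYi : ∀ i : Fin n,
      Hcond p (Y i) (fun ω => (RC.pre Y i.val ω, ((fun j => Z j ω), fun j => S j ω)))
        - Hcond p (Y i) (fun ω => (RC.pre Y i.val ω, (M ω, fun j => S j ω)))
      ≤ Icond p (X i) (Y i) (fun ω => (Z i ω, S i ω, Xr i ω)) := by
    intro i
    have u0 : Hcond p (Y i)
          (fun ω => (RC.pre Y i.val ω, ((fun j => Z j ω), fun j => S j ω)))
        ≤ Hcond p (Y i) (fun ω => (Z i ω, S i ω, Xr i ω)) := by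
      refine RC.Hcond_mono hp (Y i) _ _
        (fun x : ({j : Fin n // j.val < i.val} → 𝒴) × ((Fin n → 𝒵) × (Fin n → 𝒮)) =>
          (x.2.1 i, (x.2.2 i, fXr i (fun j => x.2.1 j.1)))) (fun ω => ?_)
      show (Z i ω, S i ω, Xr i ω)
          = (Z i ω, (S i ω, fXr i (fun j : {j : Fin n // j < i} => Z j.1 ω)))
      rw [hfXr i ω]
    have e1 : Hcond p (Y i) (fun ω => (RC.pre Y i.val ω, (M ω, fun j => S j ω)))
        = Hcond p (Y i) (fun ω =>
            ((M ω, fun j => S j ω, fun j : {j : Fin n // j < i} => Y j.1 ω),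
             (X i ω, Xr i ω, S i ω))) :=
      RC.Hcond_congr (Y i) _ _
        (fun x : ({j : Fin n // j.val < i.val} → 𝒴) × (𝕄 × (Fin n → 𝒮)) =>
          ((x.2.1, x.2.2, fun j : {j : Fin n // j < i} => x.1 ⟨j.1, j.2⟩),
           (fX i x.2.1 x.2.2,
            fXr i (fun j : {j : Fin n // j < i} => fZ j.1 x.2.1 x.2.2), x.2.2 i)))
        (fun y : (𝕄 × (Fin n → 𝒮) × ({j : Fin n // j < i} → 𝒴)) × (𝒳 × 𝒳r × 𝒮) =>
          ((fun j : {j : Fin n // j.val < i.val} => y.1.2.2 ⟨j.1, j.2⟩), (y.1.1, y.1.2.1)))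
        (fun ω => by
          show ((M ω, fun j => S j ω, fun j : {j : Fin n // j < i} => Y j.1 ω),
                (X i ω, Xr i ω, S i ω))
              = ((M ω, fun j => S j ω, fun j : {j : Fin n // j < i} => Y j.1 ω),
                 (fX i (M ω) (fun j => S j ω),
                  fXr i (fun j : {j : Fin n // j < i} => fZ j.1 (M ω) (fun l => S l ω)),
                  S i ω))
          have hz : (fun j : {j : Fin n // j < i} => fZ j.1 (M ω) (fun l => S l ω))
              = fun j : {j : Fin n // j < i} => Z j.1 ω :=
            funext fun j => (hfZ j.1 ω).symm
          rw [hz, ← hfXr i ω, ← hfX i ω])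
        (fun ω => rfl)
    have e2 : Hcond p (Y i) (fun ω =>
          ((M ω, fun j => S j ω, fun j : {j : Fin n // j < i} => Y j.1 ω),
           (X i ω, Xr i ω, S i ω)))
        = Hcond p (Y i) (fun ω => (X i ω, Xr i ω, S i ω)) :=
      RC.Hcond_eq_of_condIndep hp (Y i)
        (fun ω => (M ω, fun j => S j ω, fun j : {j : Fin n // j < i} => Y j.1 ω))
        (fun ω => (X i ω, Xr i ω, S i ω)) (hmem i)
    have u2 : Hcond p (Y i) (fun ω =>
          ((M ω, fun j => S j ω, fun j : {j : Fin n // j < i} => Y j.1 ω),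
           (X i ω, Xr i ω, S i ω)))
        ≤ Hcond p (Y i) (fun ω => (X i ω, (Z i ω, S i ω, Xr i ω))) := by
      refine RC.Hcond_mono hp (Y i) _ _
        (fun x : (𝕄 × (Fin n → 𝒮) × ({j : Fin n // j < i} → 𝒴)) × (𝒳 × 𝒳r × 𝒮) =>
          (x.2.1, (fZ i x.1.1 x.1.2.1, (x.2.2.2, x.2.2.1)))) (fun ω => ?_)
      show (X i ω, (Z i ω, S i ω, Xr i ω))
          = (X i ω, (fZ i (M ω) (fun j => S j ω), (S i ω, Xr i ω)))
      rw [hfZ i ω]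
    have u3 : Hcond p (Y i) (fun ω => (X i ω, (Z i ω, S i ω, Xr i ω)))
        ≤ Hcond p (Y i) (fun ω => (X i ω, Xr i ω, S i ω)) := by
      refine RC.Hcond_mono hp (Y i) _ _
        (fun x : 𝒳 × (𝒵 × (𝒮 × 𝒳r)) => (x.1, x.2.2.2, x.2.2.1)) (fun ω => ?_)
      rfl
    have hic : Icond p (X i) (Y i) (fun ω => (Z i ω, S i ω, Xr i ω))
        = Hcond p (Y i) (fun ω => (Z i ω, S i ω, Xr i ω))
          - Hcond p (Y i) (fun ω => (X i ω, (Z i ω, S i ω, Xr i ω))) :=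
      RC.Icond_eq (X i) (Y i) (fun ω => (Z i ω, S i ω, Xr i ω))
    linarith
  -- assemble
  have hsumZ : ∑ i : Fin n, Hcond p (Z i) (fun ω => (RC.pre Z i.val ω, fun j => S j ω))
      ≤ ∑ i : Fin n, Hcond p (Z i) (fun ω => (S i ω, Xr i ω)) :=
    Finset.sum_le_sum fun i _ => hZi i
  have hsumY : (∑ i : Fin n, Hcond p (Y i)
        (fun ω => (RC.pre Y i.val ω, ((fun j => Z j ω), fun j => S j ω))))
      - (∑ i : Fin n, Hcond p (Y i) (fun ω => (RC.pre Y i.val ω, (M ω, fun j => S j ω))))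
      ≤ ∑ i : Fin n, Icond p (X i) (Y i) (fun ω => (Z i ω, S i ω, Xr i ω)) := by
    rw [← Finset.sum_sub_distrib]
    exact Finset.sum_le_sum fun i _ => hYi i
  have hfin : (n : ℝ) * R = Hcond p M (fun ω (i : Fin n) => S i ω) := by
    rw [hMcond, hHM]
  linarith [hFano]

end
end

section
/- Let M be uniform on a set of size 2^{nR}, independent of the i.i.d. state sequence S^n, and suppose X_i and X_{r,i} are deterministic functions of (M, S^n) and of Z^{i-1} respectively, Y_i is conditionally independent of everything else given (X_i, X_{r,i}, S_i), and H(M | Y^n, S^n) <= n*eps_n. Then nR <= sum_{i=1}^n I(X_i, X_{r,i}; Y_i | S_i) + n*eps_n. -/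
open scoped BigOperators Classical
open Filter

noncomputable section

set_option linter.unusedSectionVars false
section Lib
variable {Ω α β γ : Type*} [Fintype Ω] [Fintype α] [Fintype β] [Fintype γ]

lemma prob_nonneg (p : Ω → ℝ) (hp : IsPMF p) (f : Ω → α) (a : α) : 0 ≤ prob p f a :=
  Finset.sum_nonneg fun ω _ => by by_cases h : f ω = a <;> simp [h, hp.1 ω]

lemma sum_prob (p : Ω → ℝ) (hp : IsPMF p) (f : Ω → α) : ∑ a, prob p f a = 1 := by
  unfold prob
  rw [Finset.sum_comm]
  simp only [Finset.sum_ite_eq, Finset.mem_univ, if_true]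
  exact hp.2

lemma sum_prob_mul (p : Ω → ℝ) (F : Ω → α) (G : α → ℝ) :
    ∑ a, prob p F a * G a = ∑ ω, p ω * G (F ω) := by
  simp only [prob, Finset.sum_mul, ite_mul, zero_mul]
  rw [Finset.sum_comm]
  simp [Finset.sum_ite_eq]

lemma Hent_omega (p : Ω → ℝ) (f : Ω → α) :
    Hent p f = -∑ ω, p ω * Real.logb 2 (prob p f (f ω)) := by
  rw [Hent, sum_prob_mul p f (fun a => Real.logb 2 (prob p f a))]

lemma prob_comp_inj (p : Ω → ℝ) (f : Ω → α) {e : α → β} (he : Function.Injective e) (a : α) :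
    prob p (fun ω => e (f ω)) (e a) = prob p f a := by
  unfold prob
  apply Finset.sum_congr rfl
  intro ω _
  simp [he.eq_iff]

lemma Hent_congr (p : Ω → ℝ) {f : Ω → α} {f' : Ω → β} {e : α → β} (he : Function.Injective e)
    (hfe : ∀ ω, f' ω = e (f ω)) : Hent p f' = Hent p f := by
  have hff : f' = fun ω => e (f ω) := funext hfe
  subst hff
  rw [Hent_omega, Hent_omega]
  congr 1
  apply Finset.sum_congr rfl
  intro ω _
  rw [prob_comp_inj p f he (f ω)]

lemma Hcond_congr (p : Ω → ℝ) (f : Ω → α) {g : Ω → β} {g' : Ω → γ} {e : β → γ}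
    (he : Function.Injective e) (hge : ∀ ω, g' ω = e (g ω)) :
    Hcond p f g' = Hcond p f g := by
  unfold Hcond
  rw [Hent_congr p he hge,
    Hent_congr p (Function.Injective.prodMap (fun a b h => h) he)
      (f := fun ω => (f ω, g ω)) (f' := fun ω => (f ω, g' ω))
      (e := Prod.map id e) (fun ω => by simp [hge ω])]

end Lib
section Lib2
variable {Ω α β γ : Type*} [Fintype Ω] [Fintype α] [Fintype β] [Fintype γ]

lemma sum_prob_pair_fst (p : Ω → ℝ) (f : Ω → α) (g : Ω → β) (b : β) :
    ∑ a, prob p (fun ω => (f ω, g ω)) (a, b) = prob p g b := by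
  unfold prob
  rw [Finset.sum_comm]
  apply Finset.sum_congr rfl
  intro ω _
  by_cases h : g ω = b <;> simp [Prod.ext_iff, h, Finset.sum_ite_eq]

lemma sum_prob_pair_snd (p : Ω → ℝ) (f : Ω → α) (g : Ω → β) (a : α) :
    ∑ b, prob p (fun ω => (f ω, g ω)) (a, b) = prob p f a := by
  unfold prob
  rw [Finset.sum_comm]
  apply Finset.sum_congr rfl
  intro ω _
  by_cases h : f ω = a <;> simp [Prod.ext_iff, h, Finset.sum_ite_eq]

lemma sum_prob_triple_mid (p : Ω → ℝ) (f : Ω → α) (g : Ω → β) (h : Ω → γ) (a : α) (c : γ) :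
    ∑ b, prob p (fun ω => (f ω, g ω, h ω)) (a, b, c) = prob p (fun ω => (f ω, h ω)) (a, c) := by
  unfold prob
  rw [Finset.sum_comm]
  apply Finset.sum_congr rfl
  intro ω _
  by_cases h1 : f ω = a <;> by_cases h2 : h ω = c <;>
    simp [Prod.ext_iff, h1, h2, Finset.sum_ite_eq]

lemma prob_pair_le_fst (p : Ω → ℝ) (hp : IsPMF p) (f : Ω → α) (g : Ω → β) (a : α) (b : β) :
    prob p (fun ω => (f ω, g ω)) (a, b) ≤ prob p f a := by
  rw [← sum_prob_pair_snd p f g a]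
  exact Finset.single_le_sum (fun b' _ => prob_nonneg p hp _ (a, b')) (Finset.mem_univ b)

lemma prob_pair_le_snd (p : Ω → ℝ) (hp : IsPMF p) (f : Ω → α) (g : Ω → β) (a : α) (b : β) :
    prob p (fun ω => (f ω, g ω)) (a, b) ≤ prob p g b := by
  rw [← sum_prob_pair_fst p f g b]
  exact Finset.single_le_sum (fun a' _ => prob_nonneg p hp _ (a', b)) (Finset.mem_univ a)

lemma prob_triple_le_mid (p : Ω → ℝ) (hp : IsPMF p) (f : Ω → α) (g : Ω → β) (h : Ω → γ)
    (a : α) (b : β) (c : γ) :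
    prob p (fun ω => (f ω, g ω, h ω)) (a, b, c) ≤ prob p (fun ω => (f ω, h ω)) (a, c) := by
  rw [← sum_prob_triple_mid p f g h a c]
  exact Finset.single_le_sum (fun b' _ => prob_nonneg p hp _ (a, b', c)) (Finset.mem_univ b)

end Lib2
section Lib3
variable {Ω α β γ : Type*} [Fintype Ω] [Fintype α] [Fintype β] [Fintype γ]

lemma Icond_rep (p : Ω → ℝ) (hp : IsPMF p) (f : Ω → α) (g : Ω → β) (h : Ω → γ) :
    Icond p f g h = ∑ a, ∑ b, ∑ c,
      prob p (fun ω => (f ω, g ω, h ω)) (a, b, c) *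
        (Real.logb 2 (prob p (fun ω => (f ω, g ω, h ω)) (a, b, c) * prob p h c) -
         Real.logb 2 (prob p (fun ω => (f ω, h ω)) (a, c) *
                      prob p (fun ω => (g ω, h ω)) (b, c))) := by
  classical
  have hassoc : Hent p (fun ω => ((f ω, g ω), h ω)) = Hent p (fun ω => (f ω, g ω, h ω)) := by
    refine Hent_congr p (e := fun x : α × β × γ => ((x.1, x.2.1), x.2.2)) ?_ (fun ω => rfl)
    intro x y hxy
    simp only [Prod.mk.injEq] at hxy
    exact Prod.ext hxy.1.1 (Prod.ext hxy.1.2 hxy.2)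
  have key : Icond p f g h = ∑ ω, p ω *
      ((Real.logb 2 (prob p (fun ω => (f ω, g ω, h ω)) (f ω, g ω, h ω))
        + Real.logb 2 (prob p h (h ω)))
       - (Real.logb 2 (prob p (fun ω => (f ω, h ω)) (f ω, h ω))
        + Real.logb 2 (prob p (fun ω => (g ω, h ω)) (g ω, h ω)))) := by
    simp only [Icond, Hcond]
    rw [hassoc]
    simp only [Hent_omega]
    simp only [mul_sub, mul_add, Finset.sum_sub_distrib, Finset.sum_add_distrib]
    ring
  have key2 : Icond p f g h = ∑ x : α × β × γ,
      prob p (fun ω => (f ω, g ω, h ω)) x *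
      ((Real.logb 2 (prob p (fun ω => (f ω, g ω, h ω)) x) + Real.logb 2 (prob p h x.2.2))
       - (Real.logb 2 (prob p (fun ω => (f ω, h ω)) (x.1, x.2.2))
        + Real.logb 2 (prob p (fun ω => (g ω, h ω)) (x.2.1, x.2.2)))) := by
    rw [key, sum_prob_mul p (fun ω => (f ω, g ω, h ω))
      (G := fun x => ((Real.logb 2 (prob p (fun ω => (f ω, g ω, h ω)) x)
        + Real.logb 2 (prob p h x.2.2))
       - (Real.logb 2 (prob p (fun ω => (f ω, h ω)) (x.1, x.2.2))
        + Real.logb 2 (prob p (fun ω => (g ω, h ω)) (x.2.1, x.2.2)))))]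
  rw [key2]
  rw [Fintype.sum_prod_type]
  apply Finset.sum_congr rfl
  intro a _
  rw [Fintype.sum_prod_type]
  apply Finset.sum_congr rfl
  intro b _
  apply Finset.sum_congr rfl
  intro c _
  dsimp only
  set r := prob p (fun ω => (f ω, g ω, h ω)) (a, b, c) with hr
  rcases eq_or_lt_of_le (prob_nonneg p hp (fun ω => (f ω, g ω, h ω)) (a, b, c)) with h0 | hpos
  · rw [hr.trans h0.symm]; ring
  · have h23 : r ≤ prob p (fun ω => (g ω, h ω)) (b, c) :=
      prob_pair_le_snd p hp f (fun ω => (g ω, h ω)) a (b, c)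
    have h13 : r ≤ prob p (fun ω => (f ω, h ω)) (a, c) :=
      prob_triple_le_mid p hp f g h a b c
    have h3 : prob p (fun ω => (g ω, h ω)) (b, c) ≤ prob p h c :=
      prob_pair_le_snd p hp g h b c
    rw [Real.logb_mul (ne_of_gt hpos) (ne_of_gt (lt_of_lt_of_le hpos (h23.trans h3))),
      Real.logb_mul (ne_of_gt (lt_of_lt_of_le hpos h13)) (ne_of_gt (lt_of_lt_of_le hpos h23))]

end Lib3
section Lib4
variable {Ω α β γ : Type*} [Fintype Ω] [Fintype α] [Fintype β] [Fintype γ]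

lemma kl_core {x v : ℝ} (hx : 0 < x) (hv : 0 < v) :
    x - v ≤ x * Real.log x - x * Real.log v := by
  have h1 := Real.log_le_sub_one_of_pos (div_pos hv hx)
  rw [Real.log_div hv.ne' hx.ne'] at h1
  have h2 := mul_le_mul_of_nonneg_left h1 hx.le
  have h3 : x * (v / x - 1) = v - x := by field_simp
  rw [h3] at h2
  nlinarith

lemma kl_sum {ι : Type*} [Fintype ι] (u v L : ι → ℝ)
    (hsu : ∑ i, u i = 1) (hsv : ∑ i, v i ≤ 1)
    (hL : ∀ i, (u i - v i) / Real.log 2 ≤ u i * L i) : 0 ≤ ∑ i, u i * L i := by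
  have hlog2 : (0:ℝ) < Real.log 2 := Real.log_pos one_lt_two
  calc (0:ℝ) ≤ (1 - ∑ i, v i) / Real.log 2 := div_nonneg (by linarith) hlog2.le
    _ = ∑ i, (u i - v i) / Real.log 2 := by
        rw [← Finset.sum_div, Finset.sum_sub_distrib, hsu]
    _ ≤ ∑ i, u i * L i := Finset.sum_le_sum fun i _ => hL i

lemma icond_nonneg (p : Ω → ℝ) (hp : IsPMF p) (f : Ω → α) (g : Ω → β) (h : Ω → γ) :
    0 ≤ Icond p f g h := by
  classical
  rw [Icond_rep p hp f g h]
  have hlog2 : (0:ℝ) < Real.log 2 := Real.log_pos one_lt_two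
  have main : 0 ≤ ∑ x : α × β × γ, prob p (fun ω => (f ω, g ω, h ω)) x *
      (Real.logb 2 (prob p (fun ω => (f ω, g ω, h ω)) x * prob p h x.2.2) -
       Real.logb 2 (prob p (fun ω => (f ω, h ω)) (x.1, x.2.2) *
                    prob p (fun ω => (g ω, h ω)) (x.2.1, x.2.2))) := by
    apply kl_sum (v := fun x : α × β × γ => if prob p h x.2.2 = 0 then 0 else
        prob p (fun ω => (f ω, h ω)) (x.1, x.2.2) * prob p (fun ω => (g ω, h ω)) (x.2.1, x.2.2)
          / prob p h x.2.2)
    · exact sum_prob p hp _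
    · -- sum of v ≤ 1
      rw [show (Finset.univ : Finset (α × β × γ)) = Finset.univ from rfl]
      rw [Fintype.sum_prod_type]
      have hre : ∀ a : α, ∑ y : β × γ, (if prob p h y.2 = 0 then 0 else
          prob p (fun ω => (f ω, h ω)) (a, y.2) * prob p (fun ω => (g ω, h ω)) (y.1, y.2)
            / prob p h y.2)
          = ∑ c, ∑ b, (if prob p h c = 0 then 0 else
          prob p (fun ω => (f ω, h ω)) (a, c) * prob p (fun ω => (g ω, h ω)) (b, c)
            / prob p h c) := by
        intro a
        rw [Fintype.sum_prod_type, Finset.sum_comm]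
      rw [Finset.sum_congr rfl fun a _ => hre a, Finset.sum_comm]
      have hc : ∀ c : γ, (∑ a : α, ∑ b : β, (if prob p h c = 0 then 0 else
          prob p (fun ω => (f ω, h ω)) (a, c) * prob p (fun ω => (g ω, h ω)) (b, c)
            / prob p h c)) ≤ prob p h c := by
        intro c
        by_cases h3 : prob p h c = 0
        · simp only [h3, if_true]
          simp [prob_nonneg p hp h c]
        · simp only [h3, if_false]
          have hb : ∀ a : α, ∑ b : β,
              prob p (fun ω => (f ω, h ω)) (a, c) * prob p (fun ω => (g ω, h ω)) (b, c)
                / prob p h c = prob p (fun ω => (f ω, h ω)) (a, c) := by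
            intro a
            rw [← Finset.sum_div, ← Finset.mul_sum, sum_prob_pair_fst p g h c,
              mul_div_assoc, div_self h3, mul_one]
          rw [Finset.sum_congr rfl fun a _ => hb a, sum_prob_pair_fst p f h c]
      calc ∑ c, ∑ a : α, ∑ b : β, _ ≤ ∑ c, prob p h c := Finset.sum_le_sum fun c _ => hc c
        _ = 1 := sum_prob p hp h
    · -- pointwise bound
      rintro ⟨a, b, c⟩
      dsimp only
      set u := prob p (fun ω => (f ω, g ω, h ω)) (a, b, c) with hu
      set r13 := prob p (fun ω => (f ω, h ω)) (a, c) with h13d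
      set r23 := prob p (fun ω => (g ω, h ω)) (b, c) with h23d
      set r3 := prob p h c with h3d
      by_cases hu0 : u = 0
      · rw [hu0]
        simp only [zero_mul, zero_sub]
        have hVnn : (0:ℝ) ≤ (if r3 = 0 then 0 else r13 * r23 / r3) := by
          split
          · exact le_rfl
          · exact div_nonneg (mul_nonneg (prob_nonneg p hp _ (a, c))
              (prob_nonneg p hp _ (b, c))) (prob_nonneg p hp h c)
        exact div_nonpos_iff.mpr (Or.inr ⟨neg_nonpos.mpr hVnn, hlog2.le⟩)
      · have hupos : 0 < u := (prob_nonneg p hp _ (a, b, c)).lt_of_ne (Ne.symm hu0)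
        have h23 : u ≤ r23 := prob_pair_le_snd p hp f (fun ω => (g ω, h ω)) a (b, c)
        have h13 : u ≤ r13 := prob_triple_le_mid p hp f g h a b c
        have h3' : r23 ≤ r3 := prob_pair_le_snd p hp g h b c
        have h13p : 0 < r13 := lt_of_lt_of_le hupos h13
        have h23p : 0 < r23 := lt_of_lt_of_le hupos h23
        have h3p : 0 < r3 := lt_of_lt_of_le hupos (h23.trans h3')
        rw [if_neg h3p.ne']
        have hvpos : 0 < r13 * r23 / r3 := div_pos (mul_pos h13p h23p) h3p
        have elog : Real.logb 2 (u * r3) - Real.logb 2 (r13 * r23)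
            = (Real.log u - Real.log (r13 * r23 / r3)) / Real.log 2 := by
          rw [Real.logb, Real.logb, div_sub_div_same,
            Real.log_mul hupos.ne' h3p.ne',
            Real.log_div (mul_pos h13p h23p).ne' h3p.ne']
          ring
        rw [elog, show u * ((Real.log u - Real.log (r13 * r23 / r3)) / Real.log 2)
          = (u * Real.log u - u * Real.log (r13 * r23 / r3)) / Real.log 2 by ring]
        exact (div_le_div_iff_of_pos_right hlog2).mpr (kl_core hupos hvpos)
  simpa only [Fintype.sum_prod_type] using main

lemma icond_eq_zero (p : Ω → ℝ) (hp : IsPMF p) (f : Ω → α) (g : Ω → β) (h : Ω → γ)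
    (hci : CondIndepFun p f g h) : Icond p f g h = 0 := by
  rw [Icond_rep p hp f g h]
  refine Finset.sum_eq_zero fun a _ => Finset.sum_eq_zero fun b _ => Finset.sum_eq_zero fun c _ => ?_
  rw [hci a b c]
  simp

lemma icond_eq (p : Ω → ℝ) (f : Ω → α) (g : Ω → β) (h : Ω → γ) :
    Icond p f g h = Hcond p f h - Hcond p f (fun ω => (g ω, h ω)) := by
  have hassoc : Hent p (fun ω => ((f ω, g ω), h ω)) = Hent p (fun ω => (f ω, g ω, h ω)) := by
    refine Hent_congr p (e := fun x : α × β × γ => ((x.1, x.2.1), x.2.2)) ?_ fun ω => rfl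
    intro x y hxy
    simp only [Prod.mk.injEq] at hxy
    exact Prod.ext hxy.1.1 (Prod.ext hxy.1.2 hxy.2)
  simp only [Icond, Hcond]
  rw [hassoc]
  ring

lemma icond_comm (p : Ω → ℝ) (f : Ω → α) (g : Ω → β) (h : Ω → γ) :
    Icond p f g h = Icond p g f h := by
  have hswap : Hent p (fun ω => ((f ω, g ω), h ω)) = Hent p (fun ω => ((g ω, f ω), h ω)) := by
    refine Hent_congr p (f := fun ω => ((g ω, f ω), h ω))
      (e := fun x : (β × α) × γ => ((x.1.2, x.1.1), x.2)) ?_ fun ω => rfl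
    intro x y hxy
    simp only [Prod.mk.injEq] at hxy
    exact Prod.ext (Prod.ext hxy.1.2 hxy.1.1) hxy.2
  simp only [Icond, Hcond]
  rw [hswap]
  ring

lemma hent_pair_of_indep (p : Ω → ℝ) (hp : IsPMF p) (f : Ω → α) (g : Ω → β)
    (hind : ∀ a b, prob p (fun ω => (f ω, g ω)) (a, b) = prob p f a * prob p g b) :
    Hent p (fun ω => (f ω, g ω)) = Hent p f + Hent p g := by
  have hterm : ∀ (x y : ℝ), (x * y) * Real.logb 2 (x * y)
      = y * (x * Real.logb 2 x) + x * (y * Real.logb 2 y) := by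
    intro x y
    rcases eq_or_ne x 0 with hx | hx
    · simp [hx]
    rcases eq_or_ne y 0 with hy | hy
    · simp [hy]
    rw [Real.logb_mul hx hy]; ring
  unfold Hent
  rw [Fintype.sum_prod_type]
  have hrw : ∀ a, ∑ b, prob p (fun ω => (f ω, g ω)) (a, b) *
      Real.logb 2 (prob p (fun ω => (f ω, g ω)) (a, b))
      = ∑ b, (prob p g b * (prob p f a * Real.logb 2 (prob p f a))
        + prob p f a * (prob p g b * Real.logb 2 (prob p g b))) := by
    intro a
    refine Finset.sum_congr rfl fun b _ => ?_
    rw [hind a b]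
    exact hterm _ _
  rw [Finset.sum_congr rfl fun a _ => hrw a]
  have expand : ∀ a, ∑ b, (prob p g b * (prob p f a * Real.logb 2 (prob p f a))
        + prob p f a * (prob p g b * Real.logb 2 (prob p g b)))
      = prob p f a * Real.logb 2 (prob p f a)
        + prob p f a * ∑ b, prob p g b * Real.logb 2 (prob p g b) := by
    intro a
    rw [Finset.sum_add_distrib, ← Finset.sum_mul, ← Finset.mul_sum, sum_prob p hp g, one_mul]
  rw [Finset.sum_congr rfl fun a _ => expand a, Finset.sum_add_distrib, ← Finset.sum_mul,
    sum_prob p hp f, one_mul]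
  ring

end Lib4


/-- Cut-set-style converse bound for the state-dependent semideterministic relay
channel (Theorem 2, second bound): under the same hypotheses as the first converse
bound, `nR ≤ ∑ I(X_i, X_{r,i}; Y_i | S_i) + n·ε_n`. -/
theorem relay_converse_bound_two
    {Ω 𝕄 𝒮 𝒳 𝒳r 𝒵 𝒴 : Type*} [Fintype Ω] [Fintype 𝕄] [Fintype 𝒮]
    [Fintype 𝒳] [Fintype 𝒳r] [Fintype 𝒵] [Fintype 𝒴]
    (p : Ω → ℝ) (hp : IsPMF p) (n : ℕ) (hn : 0 < n) (R eps : ℝ)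
    (M : Ω → 𝕄) (S : Fin n → Ω → 𝒮) (X : Fin n → Ω → 𝒳)
    (Xr : Fin n → Ω → 𝒳r) (Z : Fin n → Ω → 𝒵) (Y : Fin n → Ω → 𝒴)
    (hcard : (Fintype.card 𝕄 : ℝ) = 2 ^ ((n : ℝ) * R))
    (hMuniform : ∀ m, prob p M m = 1 / Fintype.card 𝕄)
    (hMindepS : ∀ m sv, prob p (fun ω => (M ω, fun i => S i ω)) (m, sv)
        = prob p M m * prob p (fun ω i => S i ω) sv)
    (hiid : ∃ q : 𝒮 → ℝ, (∀ s, 0 ≤ q s) ∧ (∑ s, q s = 1) ∧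
        ∀ sv : Fin n → 𝒮, prob p (fun ω i => S i ω) sv = ∏ i, q (sv i))
    (hX : ∀ i : Fin n, ∃ f : 𝕄 → (Fin n → 𝒮) → 𝒳, ∀ ω, X i ω = f (M ω) (fun j => S j ω))
    (hXr : ∀ i : Fin n, ∃ f : ({j : Fin n // j < i} → 𝒵) → 𝒳r,
        ∀ ω, Xr i ω = f (fun j => Z j.1 ω))
    (hmem : ∀ i : Fin n, CondIndepFun p (Y i)
        (fun ω => (M ω, fun j => S j ω, fun j : {j : Fin n // j < i} => Y j.1 ω))
        (fun ω => (X i ω, Xr i ω, S i ω)))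
    (hFano : Hcond p M (fun ω => (fun i => Y i ω, fun i => S i ω)) ≤ n * eps) :
    (n : ℝ) * R ≤ (∑ i, Icond p (fun ω => (X i ω, Xr i ω)) (Y i) (S i)) + n * eps := by
  classical
  -- Step 1: H(M) = nR
  have hKpos : (0:ℝ) < (Fintype.card 𝕄 : ℝ) := by
    rw [hcard]; exact Real.rpow_pos_of_pos (by norm_num) _
  have hHM : Hent p M = (n : ℝ) * R := by
    unfold Hent
    simp only [hMuniform]
    rw [Finset.sum_const, Finset.card_univ, nsmul_eq_mul, one_div, Real.logb_inv]
    have h1 : -((Fintype.card 𝕄 : ℝ) * (((Fintype.card 𝕄 : ℝ))⁻¹ *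
        -Real.logb 2 (Fintype.card 𝕄))) = Real.logb 2 (Fintype.card 𝕄) := by
      field_simp
    rw [h1, hcard, Real.logb_rpow (by norm_num) (by norm_num)]
  -- Step 2: H(M | S^n) = H(M)
  have hHMS : Hcond p M (fun ω i => S i ω) = Hent p M := by
    unfold Hcond
    rw [hent_pair_of_indep p hp M (fun ω i => S i ω) (fun a b => hMindepS a b)]
    ring
  -- the prefix conditional entropies
  set F : ℕ → ℝ := fun k =>
    Hcond p M (fun ω => (fun j : {j : Fin n // (j : ℕ) < k} => Y j.1 ω, fun i => S i ω))
    with hFdef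
  have hF0 : F 0 = Hcond p M (fun ω i => S i ω) := by
    simp only [hFdef]
    refine Hcond_congr p M
      (e := fun s : Fin n → 𝒮 =>
        ((fun j : {j : Fin n // (j : ℕ) < 0} => (absurd j.2 (Nat.not_lt_zero _) : 𝒴)), s))
      (fun x y hxy => congrArg Prod.snd hxy) (fun ω => ?_)
    refine Prod.ext ?_ rfl
    funext j
    exact absurd j.2 (Nat.not_lt_zero _)
  have hFn : F n = Hcond p M (fun ω => (fun i => Y i ω, fun i => S i ω)) := by
    simp only [hFdef]
    refine Hcond_congr p M
      (e := fun ys : (Fin n → 𝒴) × (Fin n → 𝒮) =>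
        ((fun j : {j : Fin n // (j : ℕ) < n} => ys.1 j.1), ys.2))
      ?_ (fun ω => rfl)
    intro x y hxy
    simp only [Prod.mk.injEq] at hxy
    refine Prod.ext ?_ hxy.2
    funext k
    exact congrFun hxy.1 ⟨k, k.isLt⟩
  -- per-step bound
  have hstep : ∀ i : Fin n, F (i : ℕ) - F ((i : ℕ) + 1)
      ≤ Icond p (fun ω => (X i ω, Xr i ω)) (Y i) (S i) := by
    intro i
    obtain ⟨fX, hfX⟩ := hX i
    set W : Ω → ({j : Fin n // (j : ℕ) < (i : ℕ)} → 𝒴) × (Fin n → 𝒮) :=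
      fun ω => (fun j => Y j.1 ω, fun k => S k ω) with hW
    set T : Ω → 𝒳 × 𝒳r × 𝒮 := fun ω => (X i ω, Xr i ω, S i ω) with hT
    set G : Ω → 𝕄 × (Fin n → 𝒮) × ({j : Fin n // j < i} → 𝒴) :=
      fun ω => (M ω, fun k => S k ω, fun j => Y j.1 ω) with hG
    have hFi : F (i : ℕ) = Hcond p M W := by
      simp only [hFdef, hW]
    have hFi1 : Hcond p M (fun ω => (Y i ω, W ω)) = F ((i : ℕ) + 1) := by
      simp only [hFdef]
      refine Hcond_congr p M
        (e := fun y : ({j : Fin n // (j : ℕ) < (i : ℕ) + 1} → 𝒴) × (Fin n → 𝒮) =>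
          (y.1 ⟨i, Nat.lt_succ_self _⟩,
            ((fun j : {j : Fin n // (j : ℕ) < (i : ℕ)} =>
              y.1 ⟨j.1, Nat.lt_succ_of_lt j.2⟩), y.2)))
        ?_ (fun ω => rfl)
      intro x y hxy
      simp only [Prod.mk.injEq] at hxy
      refine Prod.ext ?_ hxy.2.2
      funext j
      by_cases hj : (j.1 : ℕ) < (i : ℕ)
      · exact congrFun hxy.2.1 ⟨j.1, hj⟩
      · have hji : j = ⟨i, Nat.lt_succ_self _⟩ :=
          Subtype.ext (Fin.ext (Nat.le_antisymm (Nat.lt_succ_iff.mp j.2) (Nat.le_of_not_lt hj)))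
        rw [hji]
        exact hxy.1
    have step_eq : F (i : ℕ) - F ((i : ℕ) + 1)
        = Hcond p (Y i) W - Hcond p (Y i) (fun ω => (M ω, W ω)) := by
      rw [hFi, ← hFi1]
      have h1 := icond_eq p M (Y i) W
      have h2 := icond_comm p M (Y i) W
      have h3 := icond_eq p (Y i) M W
      linarith
    have hb1 : Hcond p (Y i) W ≤ Hcond p (Y i) (S i) := by
      have e3 : Hcond p (Y i) (fun ω => (W ω, S i ω)) = Hcond p (Y i) W :=
        Hcond_congr p (Y i)
          (e := fun w : ({j : Fin n // (j : ℕ) < (i : ℕ)} → 𝒴) × (Fin n → 𝒮) => (w, w.2 i))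
          (fun x y hxy => congrArg Prod.fst hxy) (fun ω => rfl)
      have h4 := icond_nonneg p hp (Y i) W (S i)
      rw [icond_eq p (Y i) W (S i)] at h4
      linarith
    have hb2 : Hcond p (Y i) T ≤ Hcond p (Y i) (fun ω => (M ω, W ω)) := by
      have h5 := icond_eq_zero p hp (Y i) G T (hmem i)
      rw [icond_eq p (Y i) G T] at h5
      have e4 : Hcond p (Y i) (fun ω => (G ω, T ω))
          = Hcond p (Y i) (fun ω => (Xr i ω, (M ω, W ω))) := by
        refine Hcond_congr p (Y i)
          (e := fun x : 𝒳r × (𝕄 × (({j : Fin n // (j : ℕ) < (i : ℕ)} → 𝒴) × (Fin n → 𝒮))) =>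
            ((x.2.1, x.2.2.2, fun j : {j : Fin n // j < i} => x.2.2.1 ⟨j.1, j.2⟩),
             (fX x.2.1 x.2.2.2, x.1, x.2.2.2 i)))
          ?_ (fun ω => ?_)
        · refine Function.LeftInverse.injective
            (g := fun y : (𝕄 × (Fin n → 𝒮) × ({j : Fin n // j < i} → 𝒴)) × (𝒳 × 𝒳r × 𝒮) =>
              (y.2.2.1, (y.1.1, ((fun j : {j : Fin n // (j : ℕ) < (i : ℕ)} =>
                y.1.2.2 ⟨j.1, j.2⟩), y.1.2.1)))) ?_
          intro x
          rfl
        · simp only [hG, hT, hW]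
          rw [hfX ω]
      have h6 := icond_nonneg p hp (Y i) (Xr i) (fun ω => (M ω, W ω))
      rw [icond_eq p (Y i) (Xr i) (fun ω => (M ω, W ω))] at h6
      linarith
    have hIc : Icond p (fun ω => (X i ω, Xr i ω)) (Y i) (S i)
        = Hcond p (Y i) (S i) - Hcond p (Y i) T := by
      rw [icond_comm p (fun ω => (X i ω, Xr i ω)) (Y i) (S i),
        icond_eq p (Y i) (fun ω => (X i ω, Xr i ω)) (S i)]
      have e5 : Hcond p (Y i) (fun ω => ((X i ω, Xr i ω), S i ω)) = Hcond p (Y i) T := by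
        refine Hcond_congr p (Y i)
          (e := fun t : 𝒳 × 𝒳r × 𝒮 => ((t.1, t.2.1), t.2.2)) ?_ (fun ω => rfl)
        intro x y hxy
        simp only [Prod.mk.injEq] at hxy
        exact Prod.ext hxy.1.1 (Prod.ext hxy.1.2 hxy.2)
      rw [e5]
    linarith
  -- telescoping and conclusion
  have tele : F 0 - F n = ∑ k ∈ Finset.range n, (F k - F (k + 1)) :=
    (Finset.sum_range_sub' F n).symm
  have hsum : ∑ k ∈ Finset.range n, (F k - F (k + 1))
      ≤ ∑ i, Icond p (fun ω => (X i ω, Xr i ω)) (Y i) (S i) := by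
    rw [← Fin.sum_univ_eq_sum_range (fun k => F k - F (k + 1)) n]
    exact Finset.sum_le_sum fun i _ => hstep i
  have hFano' : F n ≤ (n : ℝ) * eps := by rw [hFn]; exact hFano
  have : (n : ℝ) * R = (F 0 - F n) + F n := by
    rw [hF0, hHMS, hHM]; ring
  rw [this, tele]
  exact add_le_add hsum hFano'

end
end

section
/- Suppose the joint pmf of (M_1, M_2, S_1^n, S_2^n, X_1^n, X_2^n, Z_1^n, Z_2^n) factors as p(m_1) p(m_2) p(s_1^n, s_2^n) with X_{1i} a function of (M_1, S_1^i, Z_2^{i-1}), Z_{1i} a function of (X_{1i}, S_{1i}), X_{2i} a function of (M_2, S_2^i, Z_1^{i-1}), and Z_{2i} a function of (X_{2i}, S_{2i}). Then for every i, the Markov chain X_{1i} - (S_1^i, Z_1^{i-1}, Z_2^{i-1}, S_1^{i-1}, S_2^{i-1}) - (X_{2i}, S_{2i}) holds, i.e., X_{1i} is conditionally independent of (X_{2i}, S_{2i}) given (S_1^i, S_1^{i-1}, S_2^{i-1}, Z_1^{i-1}, Z_2^{i-1}). -/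
open scoped BigOperators Classical
open Filter

noncomputable section

section Helpers

/-- Indicator with a fixed classical `Decidable` instance. -/
def ind (c : Prop) (x : ℝ) : ℝ := @ite ℝ c (Classical.propDecidable c) x 0

lemma ind_pos {c : Prop} (h : c) (x : ℝ) : ind c x = x := if_pos h

lemma ind_neg {c : Prop} (h : ¬ c) (x : ℝ) : ind c x = 0 := if_neg h

lemma ind_zero (c : Prop) : ind c 0 = 0 := ite_self 0

variable {Ω : Type*} [Fintype Ω]

/-- Image of `univ` with a fixed classical `DecidableEq` instance. -/
def img {α : Type*} (f : Ω → α) : Finset α :=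
  @Finset.image Ω α (Classical.decEq α) f Finset.univ

lemma mem_img_self {α : Type*} (f : Ω → α) (ω : Ω) : f ω ∈ img f := by
  unfold img
  exact Finset.mem_image_of_mem f (Finset.mem_univ ω)

lemma exists_of_mem_img {α : Type*} {f : Ω → α} {x : α} (hx : x ∈ img f) :
    ∃ ω, f ω = x := by
  unfold img at hx
  rw [Finset.mem_image] at hx
  obtain ⟨ω, -, h⟩ := hx
  exact ⟨ω, h⟩

lemma prob_eq_zero_of_not_mem_img {α : Type*} (p : Ω → ℝ) (f : Ω → α) (x : α)
    (hx : x ∉ img f) : prob p f x = 0 := by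
  apply Finset.sum_eq_zero
  intro ω _
  rw [if_neg]
  exact fun he => hx (he ▸ mem_img_self f ω)

lemma grouping_ite {α : Type*} (p : Ω → ℝ) (T : Ω → α) (c : α → Prop) :
    (∑ ω, ind (c (T ω)) (p ω))
      = ∑ x ∈ img T, ind (c x) (prob p T x) := by
  have h1 : ∀ x ∈ img T,
      ind (c x) (prob p T x)
        = ∑ ω, ind (c x) (if T ω = x then p ω else 0) := by
    intro x _
    by_cases h : c x
    · rw [ind_pos h]
      unfold prob
      exact Finset.sum_congr rfl fun ω _ => (ind_pos h _).symm
    · rw [ind_neg h]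
      rw [eq_comm]
      exact Finset.sum_eq_zero fun ω _ => ind_neg h _
  rw [Finset.sum_congr rfl h1, Finset.sum_comm]
  apply Finset.sum_congr rfl
  intro ω _
  rw [Finset.sum_eq_single (T ω)]
  · rw [if_pos rfl]
  · intro x _ hne
    rw [if_neg fun h' => hne h'.symm, ind_zero]
  · intro h
    exact absurd (mem_img_self T ω) h

lemma W_factor {A B : Type*} (p : Ω → ℝ) (F : Ω → A) (G : Ω → B)
    (u : A → ℝ) (v : B → ℝ)
    (hprod : ∀ x : A × B, prob p (fun ω => (F ω, G ω)) x = u x.1 * v x.2)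
    (φ : A → Prop) (ψ : B → Prop) :
    (∑ ω, ind (φ (F ω) ∧ ψ (G ω)) (p ω))
      = (∑ m ∈ img F, ind (φ m) (u m)) * (∑ t ∈ img G, ind (ψ t) (v t)) := by
  have hsub : img (fun ω => (F ω, G ω)) ⊆ (img F) ×ˢ (img G) := by
    intro x hx
    obtain ⟨ω, rfl⟩ := exists_of_mem_img hx
    exact Finset.mem_product.mpr ⟨mem_img_self F ω, mem_img_self G ω⟩
  have hzero : ∀ x ∈ (img F) ×ˢ (img G),
      x ∉ img (fun ω => (F ω, G ω)) →
      ind (φ x.1 ∧ ψ x.2) (u x.1 * v x.2) = 0 := by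
    intro x _ hnx
    have h0 : u x.1 * v x.2 = 0 := by
      rw [← hprod x]
      exact prob_eq_zero_of_not_mem_img p _ x hnx
    rw [h0, ind_zero]
  calc (∑ ω, ind (φ (F ω) ∧ ψ (G ω)) (p ω))
      = ∑ x ∈ img (fun ω => (F ω, G ω)),
          ind (φ x.1 ∧ ψ x.2) (prob p (fun ω => (F ω, G ω)) x) :=
        grouping_ite p (fun ω => (F ω, G ω)) (fun x => φ x.1 ∧ ψ x.2)
    _ = ∑ x ∈ img (fun ω => (F ω, G ω)),
          ind (φ x.1 ∧ ψ x.2) (u x.1 * v x.2) :=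
        Finset.sum_congr rfl fun x _ => by rw [hprod x]
    _ = ∑ x ∈ (img F) ×ˢ (img G), ind (φ x.1 ∧ ψ x.2) (u x.1 * v x.2) :=
        Finset.sum_subset hsub hzero
    _ = ∑ m ∈ img F, ∑ t ∈ img G, ind (φ m ∧ ψ t) (u m * v t) :=
        Finset.sum_product _ _ _
    _ = ∑ m ∈ img F, ∑ t ∈ img G, ind (φ m) (u m) * ind (ψ t) (v t) :=
        Finset.sum_congr rfl fun m _ => Finset.sum_congr rfl fun t _ => by
          unfold ind; split_ifs <;> simp_all
    _ = (∑ m ∈ img F, ind (φ m) (u m)) * (∑ t ∈ img G, ind (ψ t) (v t)) :=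
        (Finset.sum_mul_sum _ _ _ _).symm

lemma W_swap {A B : Type*} (p : Ω → ℝ) (F : Ω → A) (G : Ω → B)
    (u : A → ℝ) (v : B → ℝ)
    (hprod : ∀ x : A × B, prob p (fun ω => (F ω, G ω)) x = u x.1 * v x.2)
    (φ φ' : A → Prop) (ψ ψ' : B → Prop) :
    (∑ ω, ind (φ (F ω) ∧ ψ (G ω)) (p ω)) * (∑ ω, ind (φ' (F ω) ∧ ψ' (G ω)) (p ω))
    = (∑ ω, ind (φ (F ω) ∧ ψ' (G ω)) (p ω)) * (∑ ω, ind (φ' (F ω) ∧ ψ (G ω)) (p ω)) := by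
  rw [W_factor p F G u v hprod φ ψ, W_factor p F G u v hprod φ' ψ',
      W_factor p F G u v hprod φ ψ', W_factor p F G u v hprod φ' ψ]
  ring

lemma prob_congr {α : Type*} (p : Ω → ℝ) (f : Ω → α) (x : α) (c : Ω → Prop)
    (h : ∀ ω, f ω = x ↔ c ω) :
    prob p f x = ∑ ω, ind (c ω) (p ω) :=
  Finset.sum_congr rfl fun ω _ => by
    unfold ind; exact if_congr (h ω) rfl rfl

end Helpers

/-- The condition on `m₁` cut out by the conditioning value `c`. -/
def PAfun {n : ℕ} {𝕄1 𝒮1 𝒳1 𝒵1 𝒵2 : Type*}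
    (z1 : 𝒳1 → 𝒮1 → 𝒵1)
    (f1 : ∀ i : Fin n, 𝕄1 → ({j : Fin n // j ≤ i} → 𝒮1) → ({j : Fin n // j < i} → 𝒵2) → 𝒳1)
    (i : Fin n) (cs1 : {j : Fin n // j ≤ i} → 𝒮1)
    (cz1 : {j : Fin n // j < i} → 𝒵1) (cz2 : {j : Fin n // j < i} → 𝒵2)
    (m1 : 𝕄1) : Prop :=
  ∀ j : {j : Fin n // j < i},
    z1 (f1 j.1 m1 (fun k => cs1 ⟨k.1, le_trans k.2 (le_of_lt j.2)⟩)
        (fun k => cz2 ⟨k.1, lt_trans k.2 j.2⟩))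
      (cs1 ⟨j.1, le_of_lt j.2⟩) = cz1 j

/-- The condition on `m₂` cut out by the conditioning value `c`. -/
def PBfun {n : ℕ} {𝕄2 𝒮2 𝒳2 𝒵1 𝒵2 : Type*}
    (z2 : 𝒳2 → 𝒮2 → 𝒵2)
    (f2 : ∀ i : Fin n, 𝕄2 → ({j : Fin n // j ≤ i} → 𝒮2) → ({j : Fin n // j < i} → 𝒵1) → 𝒳2)
    (i : Fin n) (cs2 : {j : Fin n // j < i} → 𝒮2)
    (cz1 : {j : Fin n // j < i} → 𝒵1) (cz2 : {j : Fin n // j < i} → 𝒵2)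
    (m2 : 𝕄2) : Prop :=
  ∀ j : {j : Fin n // j < i},
    z2 (f2 j.1 m2 (fun k => cs2 ⟨k.1, lt_of_le_of_lt k.2 j.2⟩)
        (fun k => cz1 ⟨k.1, lt_trans k.2 j.2⟩))
      (cs2 j) = cz2 j

/-- Markov-chain factorization lemma for the converse of Theorem 4 (MAC with
strictly causal partial cribbing): if `M₁, M₂, (S₁ⁿ, S₂ⁿ)` are mutually
independent, `X_{1i}` is a function of `(M₁, S₁^i, Z₂^{i-1})`,
`Z_{1i} = z₁(X_{1i}, S_{1i})`, `X_{2i}` is a function of `(M₂, S₂^i, Z₁^{i-1})`,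
and `Z_{2i} = z₂(X_{2i}, S_{2i})`, then for every `i`, `X_{1i}` is conditionally
independent of `(X_{2i}, S_{2i})` given `(S₁^i, S₂^{i-1}, Z₁^{i-1}, Z₂^{i-1})`. -/
theorem mac_markov_chain
    {Ω 𝕄1 𝕄2 𝒮1 𝒮2 𝒳1 𝒳2 𝒵1 𝒵2 : Type*} [Fintype Ω]
    (p : Ω → ℝ) (hp : IsPMF p) (n : ℕ)
    (M1 : Ω → 𝕄1) (M2 : Ω → 𝕄2)
    (S1 : Fin n → Ω → 𝒮1) (S2 : Fin n → Ω → 𝒮2)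
    (X1 : Fin n → Ω → 𝒳1) (X2 : Fin n → Ω → 𝒳2)
    (Z1 : Fin n → Ω → 𝒵1) (Z2 : Fin n → Ω → 𝒵2)
    (hfact : ∀ m1 m2 sv,
        prob p (fun ω => (M1 ω, M2 ω, (fun i => S1 i ω, fun i => S2 i ω))) (m1, m2, sv)
          = prob p M1 m1 * prob p M2 m2
            * prob p (fun ω => ((fun i => S1 i ω), (fun i => S2 i ω))) sv)
    (hX1 : ∀ i : Fin n,
        ∃ f : 𝕄1 → ({j : Fin n // j ≤ i} → 𝒮1) → ({j : Fin n // j < i} → 𝒵2) → 𝒳1,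
        ∀ ω, X1 i ω = f (M1 ω) (fun j => S1 j.1 ω) (fun j => Z2 j.1 ω))
    (hZ1 : ∃ z1 : 𝒳1 → 𝒮1 → 𝒵1, ∀ i ω, Z1 i ω = z1 (X1 i ω) (S1 i ω))
    (hX2 : ∀ i : Fin n,
        ∃ f : 𝕄2 → ({j : Fin n // j ≤ i} → 𝒮2) → ({j : Fin n // j < i} → 𝒵1) → 𝒳2,
        ∀ ω, X2 i ω = f (M2 ω) (fun j => S2 j.1 ω) (fun j => Z1 j.1 ω))
    (hZ2 : ∃ z2 : 𝒳2 → 𝒮2 → 𝒵2, ∀ i ω, Z2 i ω = z2 (X2 i ω) (S2 i ω)) :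
    ∀ i : Fin n, CondIndepFun p (X1 i)
      (fun ω => (X2 i ω, S2 i ω))
      (fun ω => (fun j : {j : Fin n // j ≤ i} => S1 j.1 ω,
                 fun j : {j : Fin n // j < i} => S2 j.1 ω,
                 fun j : {j : Fin n // j < i} => Z1 j.1 ω,
                 fun j : {j : Fin n // j < i} => Z2 j.1 ω)) := by
  choose f1 hf1 using hX1
  choose f2 hf2 using hX2
  obtain ⟨z1, hz1⟩ := hZ1
  obtain ⟨z2, hz2⟩ := hZ2
  intro i a b c
  obtain ⟨cs1, cs2, cz1, cz2⟩ := c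
  -- Forward: state/crib prefixes matching `c` plus the `PA`/`PB` conditions
  -- determine the crib signals.
  have forward : ∀ ω, (∀ j : {j : Fin n // j ≤ i}, S1 j.1 ω = cs1 j) →
      (∀ j : {j : Fin n // j < i}, S2 j.1 ω = cs2 j) →
      PAfun z1 f1 i cs1 cz1 cz2 (M1 ω) → PBfun z2 f2 i cs2 cz1 cz2 (M2 ω) →
      ∀ j : {j : Fin n // j < i}, Z1 j.1 ω = cz1 j ∧ Z2 j.1 ω = cz2 j := by
    intro ω hS1 hS2 hA hB
    have main : ∀ k : ℕ, ∀ j : {j : Fin n // j < i}, (j.1 : ℕ) = k →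
        Z1 j.1 ω = cz1 j ∧ Z2 j.1 ω = cz2 j := by
      intro k
      induction k using Nat.strong_induction_on with
      | _ k IH =>
        intro j hjk
        have hZ1pre : (fun kk : {kk : Fin n // kk < j.1} => Z1 kk.1 ω)
            = fun kk => cz1 ⟨kk.1, lt_trans kk.2 j.2⟩ := by
          funext kk
          exact (IH kk.1.1 (by rw [← hjk]; exact kk.2) ⟨kk.1, lt_trans kk.2 j.2⟩ rfl).1
        have hZ2pre : (fun kk : {kk : Fin n // kk < j.1} => Z2 kk.1 ω)
            = fun kk => cz2 ⟨kk.1, lt_trans kk.2 j.2⟩ := by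
          funext kk
          exact (IH kk.1.1 (by rw [← hjk]; exact kk.2) ⟨kk.1, lt_trans kk.2 j.2⟩ rfl).2
        have hS1pre : (fun kk : {kk : Fin n // kk ≤ j.1} => S1 kk.1 ω)
            = fun kk => cs1 ⟨kk.1, le_trans kk.2 (le_of_lt j.2)⟩ :=
          funext fun kk => hS1 ⟨kk.1, le_trans kk.2 (le_of_lt j.2)⟩
        have hS2pre : (fun kk : {kk : Fin n // kk ≤ j.1} => S2 kk.1 ω)
            = fun kk => cs2 ⟨kk.1, lt_of_le_of_lt kk.2 j.2⟩ :=
          funext fun kk => hS2 ⟨kk.1, lt_of_le_of_lt kk.2 j.2⟩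
        constructor
        · rw [hz1, hf1, hS1pre, hZ2pre, hS1 ⟨j.1, le_of_lt j.2⟩]
          exact hA j
        · rw [hz2, hf2, hS2pre, hZ1pre, hS2 j]
          exact hB j
    exact fun j => main j.1.1 j rfl
  -- Backward: if the crib signals match `c` then `PA`/`PB` hold.
  have backward : ∀ ω, (∀ j : {j : Fin n // j ≤ i}, S1 j.1 ω = cs1 j) →
      (∀ j : {j : Fin n // j < i}, S2 j.1 ω = cs2 j) →
      (∀ j : {j : Fin n // j < i}, Z1 j.1 ω = cz1 j ∧ Z2 j.1 ω = cz2 j) →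
      PAfun z1 f1 i cs1 cz1 cz2 (M1 ω) ∧ PBfun z2 f2 i cs2 cz1 cz2 (M2 ω) := by
    intro ω hS1 hS2 hZ
    constructor
    · intro j
      have h := (hZ j).1
      rw [hz1, hf1,
        show (fun kk : {kk : Fin n // kk ≤ j.1} => S1 kk.1 ω)
            = fun kk => cs1 ⟨kk.1, le_trans kk.2 (le_of_lt j.2)⟩ from
          funext fun kk => hS1 ⟨kk.1, le_trans kk.2 (le_of_lt j.2)⟩,
        show (fun kk : {kk : Fin n // kk < j.1} => Z2 kk.1 ω)
            = fun kk => cz2 ⟨kk.1, lt_trans kk.2 j.2⟩ from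
          funext fun kk => (hZ ⟨kk.1, lt_trans kk.2 j.2⟩).2,
        hS1 ⟨j.1, le_of_lt j.2⟩] at h
      exact h
    · intro j
      have h := (hZ j).2
      rw [hz2, hf2,
        show (fun kk : {kk : Fin n // kk ≤ j.1} => S2 kk.1 ω)
            = fun kk => cs2 ⟨kk.1, lt_of_le_of_lt kk.2 j.2⟩ from
          funext fun kk => hS2 ⟨kk.1, lt_of_le_of_lt kk.2 j.2⟩,
        show (fun kk : {kk : Fin n // kk < j.1} => Z1 kk.1 ω)
            = fun kk => cz1 ⟨kk.1, lt_trans kk.2 j.2⟩ from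
          funext fun kk => (hZ ⟨kk.1, lt_trans kk.2 j.2⟩).1,
        hS2 j] at h
      exact h
  -- Central characterization of the conditioning event.
  have hcen : ∀ ω : Ω,
      ((fun j : {j : Fin n // j ≤ i} => S1 j.1 ω) = cs1 ∧
       (fun j : {j : Fin n // j < i} => S2 j.1 ω) = cs2 ∧
       (fun j : {j : Fin n // j < i} => Z1 j.1 ω) = cz1 ∧
       (fun j : {j : Fin n // j < i} => Z2 j.1 ω) = cz2)
      ↔ (PAfun z1 f1 i cs1 cz1 cz2 (M1 ω) ∧ PBfun z2 f2 i cs2 cz1 cz2 (M2 ω) ∧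
         (fun j : {j : Fin n // j ≤ i} => S1 j.1 ω) = cs1 ∧
         (fun j : {j : Fin n // j < i} => S2 j.1 ω) = cs2) := by
    intro ω
    constructor
    · rintro ⟨h1, h2, h3, h4⟩
      obtain ⟨hA, hB⟩ := backward ω (fun j => congrFun h1 j) (fun j => congrFun h2 j)
        (fun j => ⟨congrFun h3 j, congrFun h4 j⟩)
      exact ⟨hA, hB, h1, h2⟩
    · rintro ⟨hA, hB, h1, h2⟩
      have hZ := forward ω (fun j => congrFun h1 j) (fun j => congrFun h2 j) hA hB
      exact ⟨h1, h2, funext fun j => (hZ j).1, funext fun j => (hZ j).2⟩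
  -- Representations of X1 i and X2 i on the conditioning event.
  have hX1rep : ∀ ω, (fun j : {j : Fin n // j ≤ i} => S1 j.1 ω) = cs1 →
      (fun j : {j : Fin n // j < i} => Z2 j.1 ω) = cz2 →
      X1 i ω = f1 i (M1 ω) cs1 cz2 := by
    intro ω h1 h4
    rw [hf1, h1, h4]
  have hX2rep : ∀ ω, (fun j : {j : Fin n // j < i} => S2 j.1 ω) = cs2 →
      (fun j : {j : Fin n // j < i} => Z1 j.1 ω) = cz1 →
      X2 i ω = f2 i (M2 ω)
        (fun k : {k : Fin n // k ≤ i} => if h : k.1 < i then cs2 ⟨k.1, h⟩ else S2 i ω) cz1 := by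
    intro ω h2 h3
    have harg : (fun k : {k : Fin n // k ≤ i} => S2 k.1 ω)
        = fun k => if h : k.1 < i then cs2 ⟨k.1, h⟩ else S2 i ω := by
      funext k
      by_cases h : k.1 < i
      · rw [dif_pos h]
        exact congrFun h2 ⟨k.1, h⟩
      · rw [dif_neg h]
        have hk : k.1 = i := le_antisymm k.2 (not_lt.mp h)
        rw [hk]
    rw [hf2, harg, h3]
  -- The four probabilities as indicator sums.
  have e_abc : prob p (fun ω => (X1 i ω, (X2 i ω, S2 i ω),
        ((fun j : {j : Fin n // j ≤ i} => S1 j.1 ω),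
         (fun j : {j : Fin n // j < i} => S2 j.1 ω),
         (fun j : {j : Fin n // j < i} => Z1 j.1 ω),
         (fun j : {j : Fin n // j < i} => Z2 j.1 ω)))) (a, b, (cs1, cs2, cz1, cz2))
      = ∑ ω, ind ((PAfun z1 f1 i cs1 cz1 cz2 (M1 ω) ∧ f1 i (M1 ω) cs1 cz2 = a) ∧
          (PBfun z2 f2 i cs2 cz1 cz2 (M2 ω) ∧
           (fun j : {j : Fin n // j ≤ i} => S1 j.1 ω) = cs1 ∧
           (fun j : {j : Fin n // j < i} => S2 j.1 ω) = cs2 ∧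
           (f2 i (M2 ω) (fun k : {k : Fin n // k ≤ i} =>
              if h : k.1 < i then cs2 ⟨k.1, h⟩ else S2 i ω) cz1, S2 i ω) = b)) (p ω) := by
    apply prob_congr
    intro ω
    simp only [Prod.mk.injEq]
    constructor
    · rintro ⟨ha, hb, h1, h2, h3, h4⟩
      obtain ⟨hA, hB, -, -⟩ := (hcen ω).mp ⟨h1, h2, h3, h4⟩
      refine ⟨⟨hA, ?_⟩, hB, h1, h2, ?_⟩
      · rw [← hX1rep ω h1 h4]; exact ha
      · rw [← hX2rep ω h2 h3]; exact hb
    · rintro ⟨⟨hA, ha⟩, hB, h1, h2, hb⟩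
      obtain ⟨-, -, h3, h4⟩ := (hcen ω).mpr ⟨hA, hB, h1, h2⟩
      refine ⟨?_, ?_, h1, h2, h3, h4⟩
      · rw [hX1rep ω h1 h4]; exact ha
      · rw [hX2rep ω h2 h3]; exact hb
  have e_c : prob p (fun ω =>
        ((fun j : {j : Fin n // j ≤ i} => S1 j.1 ω),
         (fun j : {j : Fin n // j < i} => S2 j.1 ω),
         (fun j : {j : Fin n // j < i} => Z1 j.1 ω),
         (fun j : {j : Fin n // j < i} => Z2 j.1 ω))) (cs1, cs2, cz1, cz2)
      = ∑ ω, ind ((PAfun z1 f1 i cs1 cz1 cz2 (M1 ω)) ∧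
          (PBfun z2 f2 i cs2 cz1 cz2 (M2 ω) ∧
           (fun j : {j : Fin n // j ≤ i} => S1 j.1 ω) = cs1 ∧
           (fun j : {j : Fin n // j < i} => S2 j.1 ω) = cs2)) (p ω) := by
    apply prob_congr
    intro ω
    simp only [Prod.mk.injEq]
    constructor
    · rintro ⟨h1, h2, h3, h4⟩
      obtain ⟨hA, hB, -, -⟩ := (hcen ω).mp ⟨h1, h2, h3, h4⟩
      exact ⟨hA, hB, h1, h2⟩
    · rintro ⟨hA, hB, h1, h2⟩
      obtain ⟨-, -, h3, h4⟩ := (hcen ω).mpr ⟨hA, hB, h1, h2⟩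
      exact ⟨h1, h2, h3, h4⟩
  have e_ac : prob p (fun ω => (X1 i ω,
        ((fun j : {j : Fin n // j ≤ i} => S1 j.1 ω),
         (fun j : {j : Fin n // j < i} => S2 j.1 ω),
         (fun j : {j : Fin n // j < i} => Z1 j.1 ω),
         (fun j : {j : Fin n // j < i} => Z2 j.1 ω)))) (a, (cs1, cs2, cz1, cz2))
      = ∑ ω, ind ((PAfun z1 f1 i cs1 cz1 cz2 (M1 ω) ∧ f1 i (M1 ω) cs1 cz2 = a) ∧
          (PBfun z2 f2 i cs2 cz1 cz2 (M2 ω) ∧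
           (fun j : {j : Fin n // j ≤ i} => S1 j.1 ω) = cs1 ∧
           (fun j : {j : Fin n // j < i} => S2 j.1 ω) = cs2)) (p ω) := by
    apply prob_congr
    intro ω
    simp only [Prod.mk.injEq]
    constructor
    · rintro ⟨ha, h1, h2, h3, h4⟩
      obtain ⟨hA, hB, -, -⟩ := (hcen ω).mp ⟨h1, h2, h3, h4⟩
      refine ⟨⟨hA, ?_⟩, hB, h1, h2⟩
      rw [← hX1rep ω h1 h4]; exact ha
    · rintro ⟨⟨hA, ha⟩, hB, h1, h2⟩
      obtain ⟨-, -, h3, h4⟩ := (hcen ω).mpr ⟨hA, hB, h1, h2⟩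
      refine ⟨?_, h1, h2, h3, h4⟩
      rw [hX1rep ω h1 h4]; exact ha
  have e_bc : prob p (fun ω => ((X2 i ω, S2 i ω),
        ((fun j : {j : Fin n // j ≤ i} => S1 j.1 ω),
         (fun j : {j : Fin n // j < i} => S2 j.1 ω),
         (fun j : {j : Fin n // j < i} => Z1 j.1 ω),
         (fun j : {j : Fin n // j < i} => Z2 j.1 ω)))) (b, (cs1, cs2, cz1, cz2))
      = ∑ ω, ind ((PAfun z1 f1 i cs1 cz1 cz2 (M1 ω)) ∧
          (PBfun z2 f2 i cs2 cz1 cz2 (M2 ω) ∧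
           (fun j : {j : Fin n // j ≤ i} => S1 j.1 ω) = cs1 ∧
           (fun j : {j : Fin n // j < i} => S2 j.1 ω) = cs2 ∧
           (f2 i (M2 ω) (fun k : {k : Fin n // k ≤ i} =>
              if h : k.1 < i then cs2 ⟨k.1, h⟩ else S2 i ω) cz1, S2 i ω) = b)) (p ω) := by
    apply prob_congr
    intro ω
    simp only [Prod.mk.injEq]
    constructor
    · rintro ⟨hb, h1, h2, h3, h4⟩
      obtain ⟨hA, hB, -, -⟩ := (hcen ω).mp ⟨h1, h2, h3, h4⟩
      refine ⟨hA, hB, h1, h2, ?_⟩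
      rw [← hX2rep ω h2 h3]; exact hb
    · rintro ⟨hA, hB, h1, h2, hb⟩
      obtain ⟨-, -, h3, h4⟩ := (hcen ω).mpr ⟨hA, hB, h1, h2⟩
      refine ⟨?_, h1, h2, h3, h4⟩
      rw [hX2rep ω h2 h3]; exact hb
  -- Independence of M1 from (M2, states).
  have hprod : ∀ x : 𝕄1 × (𝕄2 × ((Fin n → 𝒮1) × (Fin n → 𝒮2))),
      prob p (fun ω => (M1 ω, (M2 ω, ((fun j => S1 j ω), (fun j => S2 j ω))))) x
        = prob p M1 x.1
          * (prob p M2 x.2.1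
            * prob p (fun ω => ((fun j => S1 j ω), (fun j => S2 j ω))) x.2.2) := by
    rintro ⟨m1, m2, sv⟩
    exact (hfact m1 m2 sv).trans (mul_assoc _ _ _)
  rw [e_abc, e_c, e_ac, e_bc]
  exact W_swap p M1 (fun ω => (M2 ω, ((fun j => S1 j ω), fun j => S2 j ω)))
    (fun m => prob p M1 m)
    (fun q => prob p M2 q.1 * prob p (fun ω => ((fun j => S1 j ω), fun j => S2 j ω)) q.2)
    hprod
    (fun m1 => PAfun z1 f1 i cs1 cz1 cz2 m1 ∧ f1 i m1 cs1 cz2 = a)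
    (fun m1 => PAfun z1 f1 i cs1 cz1 cz2 m1)
    (fun q => PBfun z2 f2 i cs2 cz1 cz2 q.1 ∧
      (fun j : {j : Fin n // j ≤ i} => q.2.1 j.1) = cs1 ∧
      (fun j : {j : Fin n // j < i} => q.2.2 j.1) = cs2 ∧
      (f2 i q.1 (fun k : {k : Fin n // k ≤ i} =>
        if h : k.1 < i then cs2 ⟨k.1, h⟩ else q.2.2 i) cz1, q.2.2 i) = b)
    (fun q => PBfun z2 f2 i cs2 cz1 cz2 q.1 ∧
      (fun j : {j : Fin n // j ≤ i} => q.2.1 j.1) = cs1 ∧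
      (fun j : {j : Fin n // j < i} => q.2.2 j.1) = cs2)

end
end

section
/- Let X, Y, Y', U be discrete random variables such that X - (U, Y) - (X', Y') and X' - (U, Y') - (X, Y) are both Markov chains (i.e., X is conditionally independent of (X', Y') given (U, Y), and X' is conditionally independent of (X, Y) given (U, Y')). Then X - (U, Y) - (U, Y') - X' is a Markov chain in the sense that p(x, x' | u, y, y') = p(x | u, y) p(x' | u, y'). -/
open scoped BigOperators Classical
open Filter

noncomputable section

lemma prob_congr_s8 {Ω α β : Type*} [Fintype Ω] (p : Ω → ℝ) {f : Ω → α} {g : Ω → β}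
    {a : α} {b : β} (h : ∀ ω, f ω = a ↔ g ω = b) :
    prob p f a = prob p g b := by
  unfold prob
  exact Finset.sum_congr rfl fun ω _ => by rw [if_congr (h ω) rfl rfl]

lemma prob_marginal {Ω α β : Type*} [Fintype Ω] (p : Ω → ℝ)
    (f : Ω → α) (g : Ω → β) (c : β) :
    ∑ a ∈ Finset.image f Finset.univ, prob p (fun ω => (f ω, g ω)) (a, c)
      = prob p g c := by
  unfold prob
  rw [Finset.sum_comm]
  refine Finset.sum_congr rfl fun ω _ => ?_
  rw [Finset.sum_eq_single (f ω)]
  · simp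
  · intro b _ hb
    simp [Prod.ext_iff, (Ne.symm hb : f ω ≠ b)]
  · intro h; exact absurd (Finset.mem_image_of_mem f (Finset.mem_univ ω)) h

/-- Combining two one-sided Markov chains: if `X ⫫ (X', Y') | (U, Y)` and
`X' ⫫ (X, Y) | (U, Y')`, then `p(x, x' | u, y, y') = p(x | u, y) · p(x' | u, y')`,
stated multiplicatively without division. -/
theorem two_sided_markov {Ω 𝒳 𝒳' 𝒴 𝒴' 𝒰 : Type*} [Fintype Ω]
    (p : Ω → ℝ) (hp : IsPMF p)
    (X : Ω → 𝒳) (X' : Ω → 𝒳') (Y : Ω → 𝒴) (Y' : Ω → 𝒴') (U : Ω → 𝒰)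
    (h1 : CondIndepFun p X (fun ω => (X' ω, Y' ω)) (fun ω => (U ω, Y ω)))
    (h2 : CondIndepFun p X' (fun ω => (X ω, Y ω)) (fun ω => (U ω, Y' ω))) :
    ∀ x x' u y y',
      prob p (fun ω => (X ω, X' ω, U ω, Y ω, Y' ω)) (x, x', u, y, y')
          * (prob p (fun ω => (U ω, Y ω)) (u, y)
            * prob p (fun ω => (U ω, Y' ω)) (u, y'))
        = prob p (fun ω => (X ω, U ω, Y ω)) (x, u, y)
          * prob p (fun ω => (X' ω, U ω, Y' ω)) (x', u, y')
          * prob p (fun ω => (U ω, Y ω, Y' ω)) (u, y, y') := by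
  intro x x' u y y'
  have hA := h1 x (x', y') (u, y)
  have e1 : prob p (fun ω => (X ω, (X' ω, Y' ω), (U ω, Y ω))) (x, (x', y'), (u, y))
      = prob p (fun ω => (X ω, X' ω, U ω, Y ω, Y' ω)) (x, x', u, y, y') := by
    refine prob_congr_s8 p fun ω => ?_
    simp only [Prod.ext_iff]; tauto
  have e3 : prob p (fun ω => ((X' ω, Y' ω), (U ω, Y ω))) ((x', y'), (u, y))
      = prob p (fun ω => (X' ω, Y ω, U ω, Y' ω)) (x', y, u, y') := by
    refine prob_congr_s8 p fun ω => ?_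
    simp only [Prod.ext_iff]; tauto
  rw [e1, e3] at hA
  have hB : prob p (fun ω => (X' ω, Y ω, U ω, Y' ω)) (x', y, u, y')
        * prob p (fun ω => (U ω, Y' ω)) (u, y')
      = prob p (fun ω => (X' ω, U ω, Y' ω)) (x', u, y')
        * prob p (fun ω => (Y ω, U ω, Y' ω)) (y, u, y') := by
    rw [← prob_marginal p X (fun ω => (X' ω, Y ω, U ω, Y' ω)) (x', y, u, y'),
        ← prob_marginal p X (fun ω => (Y ω, U ω, Y' ω)) (y, u, y'),
        Finset.sum_mul, Finset.mul_sum]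
    refine Finset.sum_congr rfl fun xv _ => ?_
    have h := h2 x' (xv, y) (u, y')
    have c1 : prob p (fun ω => (X' ω, (X ω, Y ω), (U ω, Y' ω))) (x', (xv, y), (u, y'))
        = prob p (fun ω => (X ω, (X' ω, Y ω, U ω, Y' ω))) (xv, (x', y, u, y')) := by
      refine prob_congr_s8 p fun ω => ?_
      simp only [Prod.ext_iff]; tauto
    have c2 : prob p (fun ω => ((X ω, Y ω), (U ω, Y' ω))) ((xv, y), (u, y'))
        = prob p (fun ω => (X ω, (Y ω, U ω, Y' ω))) (xv, (y, u, y')) := by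
      refine prob_congr_s8 p fun ω => ?_
      simp only [Prod.ext_iff]; tauto
    rw [c1, c2] at h
    exact h
  have cY : prob p (fun ω => (Y ω, U ω, Y' ω)) (y, u, y')
      = prob p (fun ω => (U ω, Y ω, Y' ω)) (u, y, y') := by
    refine prob_congr_s8 p fun ω => ?_
    simp only [Prod.ext_iff]; tauto
  rw [cY] at hB
  linear_combination prob p (fun ω => (U ω, Y' ω)) (u, y') * hA
    + prob p (fun ω => (X ω, U ω, Y ω)) (x, u, y) * hB


end
end

section
/- Let M, S^n be independent with M uniform on [1:2^{nR}] and S^n i.i.d. Suppose for each i, the tuple (X_i, X_{r,i}, Z^{i-1}, S^{i-1}) is a deterministic function of (M, S^n), the channel is memoryless in the sense that Y_i is conditionally independent of (M, S^n, Y^{i-1}) given (X_i, X_{r,i}, S_i), X_{r,i} is a function of (U_i, Z_i) where U_i = (Z^{i-1}, S^{i-1}) and Z_i = z(X_i, S_i), and H(M|Y^n,S^n) <= n*eps_n. Then nR <= sum_{i=1}^n I(U_i, X_i; Y_i | S_i) + n*eps_n. -/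
open scoped BigOperators Classical
open Filter

set_option linter.unusedSectionVars false
set_option maxHeartbeats 1000000

noncomputable section

namespace RWD
variable {Ω α β γ : Type*} [Fintype Ω] [Fintype α] [Fintype β] [Fintype γ]
variable {p : Ω → ℝ}


lemma prob_nonneg (hp : ∀ ω, 0 ≤ p ω) (f : Ω → α) (a : α) : 0 ≤ prob p f a := by
  apply Finset.sum_nonneg; intro ω _; split <;> simp [hp ω]

lemma sum_prob (hp : IsPMF p) (f : Ω → α) : ∑ a, prob p f a = 1 := by
  unfold prob; rw [Finset.sum_comm]
  rw [← hp.2]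
  apply Finset.sum_congr rfl; intro ω _
  simp [Finset.sum_ite_eq']

lemma prob_marg_right (f : Ω → α) (g : Ω → β) (a : α) :
    ∑ b, prob p (fun ω => (f ω, g ω)) (a, b) = prob p f a := by
  unfold prob; rw [Finset.sum_comm]
  apply Finset.sum_congr rfl; intro ω _
  by_cases h : f ω = a <;> simp [Prod.ext_iff, h, Finset.sum_ite_eq']

lemma prob_marg_left (f : Ω → α) (g : Ω → β) (b : β) :
    ∑ a, prob p (fun ω => (f ω, g ω)) (a, b) = prob p g b := by
  unfold prob; rw [Finset.sum_comm]
  apply Finset.sum_congr rfl; intro ω _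
  by_cases h : g ω = b <;> simp [Prod.ext_iff, h, Finset.sum_ite_eq']

lemma prob_marg3_mid (f : Ω → α) (g : Ω → β) (h : Ω → γ) (a : α) (c : γ) :
    ∑ b, prob p (fun ω => (f ω, g ω, h ω)) (a, b, c)
      = prob p (fun ω => (f ω, h ω)) (a, c) := by
  unfold prob; rw [Finset.sum_comm]
  apply Finset.sum_congr rfl; intro ω _
  by_cases h1 : f ω = a <;> by_cases h2 : h ω = c <;>
    simp [Prod.ext_iff, h1, h2, Finset.sum_ite_eq']

lemma prob_marg3_left (f : Ω → α) (g : Ω → β) (h : Ω → γ) (b : β) (c : γ) :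
    ∑ a, prob p (fun ω => (f ω, g ω, h ω)) (a, b, c)
      = prob p (fun ω => (g ω, h ω)) (b, c) := by
  unfold prob; rw [Finset.sum_comm]
  apply Finset.sum_congr rfl; intro ω _
  by_cases h1 : g ω = b <;> by_cases h2 : h ω = c <;>
    simp [Prod.ext_iff, h1, h2, Finset.sum_ite_eq']



lemma prob_comp_inj {e : α → β} (he : Function.Injective e) (k : Ω → α) (a : α) :
    prob p (fun ω => e (k ω)) (e a) = prob p k a := by
  unfold prob; apply Finset.sum_congr rfl; intro ω _
  simp [he.eq_iff]

lemma prob_comp_notin {e : α → β} (k : Ω → α) {b : β} (hb : b ∉ Set.range e) :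
    prob p (fun ω => e (k ω)) b = 0 := by
  unfold prob; apply Finset.sum_eq_zero; intro ω _
  have : e (k ω) ≠ b := fun h => hb ⟨k ω, h⟩
  simp [this]

lemma Hent_comp_inj {e : α → β} (he : Function.Injective e) (k : Ω → α) :
    Hent p (fun ω => e (k ω)) = Hent p k := by
  unfold Hent; congr 1
  have h1 : ∑ b : β, prob p (fun ω => e (k ω)) b *
      Real.logb 2 (prob p (fun ω => e (k ω)) b)
      = ∑ b ∈ Finset.univ.image e, prob p (fun ω => e (k ω)) b *
      Real.logb 2 (prob p (fun ω => e (k ω)) b) := by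
    symm
    apply Finset.sum_subset (Finset.subset_univ _)
    intro b _ hb
    have hbr : b ∉ Set.range e := by
      intro ⟨a, ha⟩; exact hb (Finset.mem_image.mpr ⟨a, Finset.mem_univ a, ha⟩)
    rw [prob_comp_notin k hbr]; simp
  rw [h1, Finset.sum_image (by intro x _ y _ h; exact he h)]
  apply Finset.sum_congr rfl; intro a _
  rw [prob_comp_inj he]

/-- mutual determination -/
def MutDet (k : Ω → α) (k' : Ω → β) : Prop :=
  (∃ e : α → β, ∀ ω, k' ω = e (k ω)) ∧ (∃ e' : β → α, ∀ ω, k ω = e' (k' ω))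

lemma MutDet.symm {k : Ω → α} {k' : Ω → β} (h : MutDet k k') : MutDet k' k :=
  ⟨h.2, h.1⟩

lemma Hent_pair_det {k : Ω → α} {k' : Ω → β} (e : α → β) (hk : ∀ ω, k' ω = e (k ω)) :
    Hent p (fun ω => (k ω, k' ω)) = Hent p k := by
  have : (fun ω => (k ω, k' ω)) = fun ω => ((fun x => (x, e x)) (k ω)) := by
    funext ω; simp [hk ω]
  rw [this]
  exact Hent_comp_inj (e := fun x => (x, e x)) (fun x y h => congrArg Prod.fst h) k

lemma Hent_swap (k : Ω → α) (k' : Ω → β) :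
    Hent p (fun ω => (k ω, k' ω)) = Hent p (fun ω => (k' ω, k ω)) := by
  have : (fun ω => (k' ω, k ω)) = fun ω => Prod.swap ((fun ω => (k ω, k' ω)) ω) := rfl
  rw [this, Hent_comp_inj Prod.swap_injective]

lemma Hent_congr_mutdet {k : Ω → α} {k' : Ω → β} (h : MutDet k k') :
    Hent p k = Hent p k' := by
  obtain ⟨⟨e, he⟩, ⟨e', he'⟩⟩ := h
  rw [← Hent_pair_det e he, Hent_swap, Hent_pair_det e' he']



lemma key_ineq {r q1 q2 q3 : ℝ} (hr : 0 ≤ r) (h1 : r ≤ q1) (h2 : r ≤ q2) (h3 : r ≤ q3)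
    (hq1 : 0 ≤ q1) (hq2 : 0 ≤ q2) (hq3 : 0 ≤ q3) :
    r * Real.logb 2 q1 + r * Real.logb 2 q2 - r * Real.logb 2 q3 - r * Real.logb 2 r
      ≤ (q1 * q2 / q3 - r) / Real.log 2 := by
  have hlog2 : 0 < Real.log 2 := Real.log_pos (by norm_num)
  rcases eq_or_lt_of_le hr with hr0 | hr0
  · rw [← hr0]
    simp
    positivity
  · have hq1' : 0 < q1 := lt_of_lt_of_le hr0 h1
    have hq2' : 0 < q2 := lt_of_lt_of_le hr0 h2
    have hq3' : 0 < q3 := lt_of_lt_of_le hr0 h3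
    have ht : 0 < q1 * q2 / (q3 * r) := by positivity
    have hlt := Real.log_le_sub_one_of_pos ht
    have hmul : r * Real.log (q1 * q2 / (q3 * r)) ≤ q1 * q2 / q3 - r := by
      calc r * Real.log (q1 * q2 / (q3 * r)) ≤ r * (q1 * q2 / (q3 * r) - 1) := by
            apply mul_le_mul_of_nonneg_left hlt hr
        _ = q1 * q2 / q3 - r := by field_simp
    have hexp : Real.log (q1 * q2 / (q3 * r))
        = Real.log q1 + Real.log q2 - Real.log q3 - Real.log r := by
      rw [Real.log_div (by positivity) (by positivity),
          Real.log_mul (ne_of_gt hq1') (ne_of_gt hq2'),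
          Real.log_mul (ne_of_gt hq3') (ne_of_gt hr0)]
      ring
    rw [hexp] at hmul
    simp only [Real.logb]
    have h2' : r * (Real.log q1 / Real.log 2) + r * (Real.log q2 / Real.log 2)
          - r * (Real.log q3 / Real.log 2) - r * (Real.log r / Real.log 2)
        = (r * (Real.log q1 + Real.log q2 - Real.log q3 - Real.log r)) / Real.log 2 := by
          ring
    rw [h2']
    exact div_le_div_of_nonneg_right hmul hlog2.le

lemma key_eq {r q1 q2 q3 : ℝ} (hr : 0 ≤ r) (h1 : r ≤ q1) (h2 : r ≤ q2) (h3 : r ≤ q3)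
    (hprod : r * q3 = q1 * q2) :
    r * Real.logb 2 q1 + r * Real.logb 2 q2 - r * Real.logb 2 q3 - r * Real.logb 2 r
      = 0 := by
  rcases eq_or_lt_of_le hr with hr0 | hr0
  · rw [← hr0]; ring
  · have hq1' : 0 < q1 := lt_of_lt_of_le hr0 h1
    have hq2' : 0 < q2 := lt_of_lt_of_le hr0 h2
    have hq3' : 0 < q3 := lt_of_lt_of_le hr0 h3
    have : Real.logb 2 q1 + Real.logb 2 q2 = Real.logb 2 r + Real.logb 2 q3 := by
      rw [← Real.logb_mul (ne_of_gt hq1') (ne_of_gt hq2'),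
          ← Real.logb_mul (ne_of_gt hr0) (ne_of_gt hq3'), hprod]
    nlinarith [this]

lemma mul_logb_mul (x y : ℝ) (hx : 0 ≤ x) (hy : 0 ≤ y) :
    x * y * Real.logb 2 (x * y) = x * y * Real.logb 2 x + x * y * Real.logb 2 y := by
  rcases eq_or_lt_of_le hx with h | h
  · simp [← h]
  rcases eq_or_lt_of_le hy with h' | h'
  · simp [← h']
  rw [Real.logb_mul (ne_of_gt h) (ne_of_gt h')]; ring

section Expand
variable (f : Ω → α) (g : Ω → β) (h : Ω → γ)

local notation "r" => fun a b c => prob p (fun ω => (f ω, g ω, h ω)) (a, b, c)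

lemma Hent_expand3 :
    Hent p (fun ω => (f ω, g ω, h ω))
      = -∑ a, ∑ b, ∑ c, (r) a b c * Real.logb 2 ((r) a b c) := by
  unfold Hent
  rw [Fintype.sum_prod_type]
  congr 1; apply Finset.sum_congr rfl; intro a _
  rw [Fintype.sum_prod_type]

lemma Hfh_expand :
    Hent p (fun ω => (f ω, h ω))
      = -∑ a, ∑ b, ∑ c, (r) a b c * Real.logb 2 (prob p (fun ω => (f ω, h ω)) (a, c)) := by
  unfold Hent
  rw [Fintype.sum_prod_type]
  congr 1; apply Finset.sum_congr rfl; intro a _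
  rw [Finset.sum_comm]
  apply Finset.sum_congr rfl; intro c _
  rw [← prob_marg3_mid f g h a c, Finset.sum_mul]

lemma Hgh_expand :
    Hent p (fun ω => (g ω, h ω))
      = -∑ a, ∑ b, ∑ c, (r) a b c * Real.logb 2 (prob p (fun ω => (g ω, h ω)) (b, c)) := by
  unfold Hent
  rw [Fintype.sum_prod_type]
  have h1 : ∑ a, ∑ b, ∑ c, (r) a b c * Real.logb 2 (prob p (fun ω => (g ω, h ω)) (b, c))
      = ∑ b, ∑ c, ∑ a, (r) a b c * Real.logb 2 (prob p (fun ω => (g ω, h ω)) (b, c)) := by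
    rw [Finset.sum_comm]
    exact Finset.sum_congr rfl fun b _ => Finset.sum_comm
  rw [h1]
  congr 1; apply Finset.sum_congr rfl; intro b _
  apply Finset.sum_congr rfl; intro c _
  rw [← Finset.sum_mul, prob_marg3_left f g h b c]

lemma Hh_expand :
    Hent p h
      = -∑ a, ∑ b, ∑ c, (r) a b c * Real.logb 2 (prob p h c) := by
  unfold Hent
  have key : ∀ c, prob p h c = ∑ a, ∑ b, (r) a b c := by
    intro c
    rw [Finset.sum_comm]
    have h2 : ∀ b, ∑ a, (r) a b c = prob p (fun ω => (g ω, h ω)) (b, c) :=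
      fun b => prob_marg3_left f g h b c
    rw [Finset.sum_congr rfl (fun b _ => h2 b), prob_marg_left g h c]
  have : ∑ c, prob p h c * Real.logb 2 (prob p h c)
      = ∑ c, ∑ a, ∑ b, (r) a b c * Real.logb 2 (prob p h c) := by
    apply Finset.sum_congr rfl; intro c _
    rw [key c, Finset.sum_mul]
    apply Finset.sum_congr rfl; intro a _
    rw [Finset.sum_mul]
  rw [this]; congr 1
  rw [Finset.sum_comm]
  apply Finset.sum_congr rfl; intro a _
  rw [Finset.sum_comm]

lemma r_le_q1 (hp : IsPMF p) (a b c) :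
    (r) a b c ≤ prob p (fun ω => (f ω, h ω)) (a, c) := by
  rw [← prob_marg3_mid f g h a c]
  exact Finset.single_le_sum
    (f := fun b' => prob p (fun ω => (f ω, g ω, h ω)) (a, b', c))
    (fun b' _ => prob_nonneg hp.1 _ _) (Finset.mem_univ b)

lemma r_le_q2 (hp : IsPMF p) (a b c) :
    (r) a b c ≤ prob p (fun ω => (g ω, h ω)) (b, c) := by
  rw [← prob_marg3_left f g h b c]
  exact Finset.single_le_sum
    (f := fun a' => prob p (fun ω => (f ω, g ω, h ω)) (a', b, c))
    (fun a' _ => prob_nonneg hp.1 _ _) (Finset.mem_univ a)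

lemma q1_le_q3 (hp : IsPMF p) (a c) :
    prob p (fun ω => (f ω, h ω)) (a, c) ≤ prob p h c := by
  rw [← prob_marg_left f h c]
  exact Finset.single_le_sum
    (f := fun a' => prob p (fun ω => (f ω, h ω)) (a', c))
    (fun a' _ => prob_nonneg hp.1 _ _) (Finset.mem_univ a)

lemma sum_r_eq_one (hp : IsPMF p) : ∑ a, ∑ b, ∑ c, (r) a b c = 1 := by
  have : ∀ a, ∑ b, ∑ c, (r) a b c = ∑ c, ∑ b, (r) a b c := fun a => Finset.sum_comm
  rw [Finset.sum_congr rfl (fun a _ => this a), Finset.sum_comm]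
  have : ∀ c, ∑ a, ∑ b, (r) a b c = prob p h c := by
    intro c
    rw [Finset.sum_congr rfl (fun a _ => prob_marg3_mid f g h a c)]
    exact prob_marg_left f h c
  rw [Finset.sum_congr rfl (fun c _ => this c)]
  exact sum_prob hp h

lemma sum_ratio_le_one (hp : IsPMF p) :
    ∑ a, ∑ b, ∑ c, prob p (fun ω => (f ω, h ω)) (a, c)
      * prob p (fun ω => (g ω, h ω)) (b, c) / prob p h c ≤ 1 := by
  have reorder : ∑ a, ∑ b, ∑ c, prob p (fun ω => (f ω, h ω)) (a, c)
      * prob p (fun ω => (g ω, h ω)) (b, c) / prob p h c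
      = ∑ c, ∑ a, ∑ b, prob p (fun ω => (f ω, h ω)) (a, c)
      * prob p (fun ω => (g ω, h ω)) (b, c) / prob p h c :=
    (Finset.sum_congr rfl fun a _ => Finset.sum_comm).trans Finset.sum_comm
  rw [reorder]
  have main : ∀ c ∈ Finset.univ, ∑ a, ∑ b, prob p (fun ω => (f ω, h ω)) (a, c)
      * prob p (fun ω => (g ω, h ω)) (b, c) / prob p h c ≤ prob p h c := by
    intro c _
    by_cases hc : prob p h c = 0
    · have hz : ∀ a, prob p (fun ω => (f ω, h ω)) (a, c) = 0 := by
        intro a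
        have h1 := q1_le_q3 f h hp a c
        have h2 := prob_nonneg (p := p) hp.1 (fun ω => (f ω, h ω)) (a, c)
        linarith [hc ▸ h1]
      have : ∀ a, ∑ b, prob p (fun ω => (f ω, h ω)) (a, c)
          * prob p (fun ω => (g ω, h ω)) (b, c) / prob p h c = 0 := by
        intro a; apply Finset.sum_eq_zero; intro b _; rw [hz a]; simp
      rw [Finset.sum_congr rfl (fun a _ => this a)]
      simp [prob_nonneg hp.1 h c]
    · have step : ∀ a, ∑ b, prob p (fun ω => (f ω, h ω)) (a, c)
          * prob p (fun ω => (g ω, h ω)) (b, c) / prob p h c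
          = prob p (fun ω => (f ω, h ω)) (a, c) := by
        intro a
        rw [← Finset.sum_div, ← Finset.mul_sum, prob_marg_left g h c,
          mul_div_assoc, div_self hc, mul_one]
      rw [Finset.sum_congr rfl (fun a _ => step a), prob_marg_left f h c]
  calc ∑ c, ∑ a, ∑ b, prob p (fun ω => (f ω, h ω)) (a, c)
      * prob p (fun ω => (g ω, h ω)) (b, c) / prob p h c
      ≤ ∑ c, prob p h c := Finset.sum_le_sum main
    _ = 1 := sum_prob hp h

lemma Hent_submod (hp : IsPMF p) :
    Hent p (fun ω => (f ω, g ω, h ω)) + Hent p h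
      ≤ Hent p (fun ω => (f ω, h ω)) + Hent p (fun ω => (g ω, h ω)) := by
  rw [Hent_expand3 f g h, Hfh_expand f g h, Hgh_expand f g h, Hh_expand f g h]
  have key : ∑ a, ∑ b, ∑ c,
      ((r) a b c * Real.logb 2 (prob p (fun ω => (f ω, h ω)) (a, c))
       + (r) a b c * Real.logb 2 (prob p (fun ω => (g ω, h ω)) (b, c))
       - (r) a b c * Real.logb 2 (prob p h c)
       - (r) a b c * Real.logb 2 ((r) a b c)) ≤ 0 := by
    calc ∑ a, ∑ b, ∑ c,
          ((r) a b c * Real.logb 2 (prob p (fun ω => (f ω, h ω)) (a, c))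
           + (r) a b c * Real.logb 2 (prob p (fun ω => (g ω, h ω)) (b, c))
           - (r) a b c * Real.logb 2 (prob p h c)
           - (r) a b c * Real.logb 2 ((r) a b c))
        ≤ ∑ a, ∑ b, ∑ c,
          (prob p (fun ω => (f ω, h ω)) (a, c)
            * prob p (fun ω => (g ω, h ω)) (b, c) / prob p h c - (r) a b c)
            / Real.log 2 := by
          apply Finset.sum_le_sum; intro a _
          apply Finset.sum_le_sum; intro b _
          apply Finset.sum_le_sum; intro c _
          exact key_ineq (prob_nonneg hp.1 _ _) (r_le_q1 f g h hp a b c)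
            (r_le_q2 f g h hp a b c)
            ((r_le_q1 f g h hp a b c).trans (q1_le_q3 f h hp a c))
            (prob_nonneg hp.1 _ _) (prob_nonneg hp.1 _ _) (prob_nonneg hp.1 _ _)
      _ ≤ 0 := by
          have expand : ∑ a, ∑ b, ∑ c,
              (prob p (fun ω => (f ω, h ω)) (a, c)
                * prob p (fun ω => (g ω, h ω)) (b, c) / prob p h c - (r) a b c)
                / Real.log 2
              = ((∑ a, ∑ b, ∑ c, prob p (fun ω => (f ω, h ω)) (a, c)
                * prob p (fun ω => (g ω, h ω)) (b, c) / prob p h c)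
                 - (∑ a, ∑ b, ∑ c, (r) a b c)) / Real.log 2 := by
            simp only [sub_div, Finset.sum_sub_distrib, Finset.sum_div]
          rw [expand, sum_r_eq_one f g h hp]
          apply div_nonpos_of_nonpos_of_nonneg
          · linarith [sum_ratio_le_one f g h hp]
          · exact (Real.log_pos (by norm_num)).le
  have split : ∀ (F G H K : α → β → γ → ℝ),
      ∑ a, ∑ b, ∑ c, (F a b c + G a b c - H a b c - K a b c)
      = (∑ a, ∑ b, ∑ c, F a b c) + (∑ a, ∑ b, ∑ c, G a b c)
        - (∑ a, ∑ b, ∑ c, H a b c) - (∑ a, ∑ b, ∑ c, K a b c) := by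
    intro F G H K
    rw [← Finset.sum_add_distrib, ← Finset.sum_sub_distrib, ← Finset.sum_sub_distrib]
    apply Finset.sum_congr rfl; intro a _
    rw [← Finset.sum_add_distrib, ← Finset.sum_sub_distrib, ← Finset.sum_sub_distrib]
    apply Finset.sum_congr rfl; intro b _
    rw [← Finset.sum_add_distrib, ← Finset.sum_sub_distrib, ← Finset.sum_sub_distrib]
  rw [split] at key
  linarith [key]

lemma Hent_condindep (hp : IsPMF p) (hci : CondIndepFun p f g h) :
    Hent p (fun ω => (f ω, g ω, h ω)) + Hent p h
      = Hent p (fun ω => (f ω, h ω)) + Hent p (fun ω => (g ω, h ω)) := by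
  rw [Hent_expand3 f g h, Hfh_expand f g h, Hgh_expand f g h, Hh_expand f g h]
  have key : ∑ a, ∑ b, ∑ c,
      ((r) a b c * Real.logb 2 (prob p (fun ω => (f ω, h ω)) (a, c))
       + (r) a b c * Real.logb 2 (prob p (fun ω => (g ω, h ω)) (b, c))
       - (r) a b c * Real.logb 2 (prob p h c)
       - (r) a b c * Real.logb 2 ((r) a b c)) = 0 := by
    apply Finset.sum_eq_zero; intro a _
    apply Finset.sum_eq_zero; intro b _
    apply Finset.sum_eq_zero; intro c _
    exact key_eq (prob_nonneg hp.1 _ _) (r_le_q1 f g h hp a b c)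
      (r_le_q2 f g h hp a b c)
      ((r_le_q1 f g h hp a b c).trans (q1_le_q3 f h hp a c))
      (hci a b c)
  have split : ∀ (F G H K : α → β → γ → ℝ),
      ∑ a, ∑ b, ∑ c, (F a b c + G a b c - H a b c - K a b c)
      = (∑ a, ∑ b, ∑ c, F a b c) + (∑ a, ∑ b, ∑ c, G a b c)
        - (∑ a, ∑ b, ∑ c, H a b c) - (∑ a, ∑ b, ∑ c, K a b c) := by
    intro F G H K
    rw [← Finset.sum_add_distrib, ← Finset.sum_sub_distrib, ← Finset.sum_sub_distrib]
    apply Finset.sum_congr rfl; intro a _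
    rw [← Finset.sum_add_distrib, ← Finset.sum_sub_distrib, ← Finset.sum_sub_distrib]
    apply Finset.sum_congr rfl; intro b _
    rw [← Finset.sum_add_distrib, ← Finset.sum_sub_distrib, ← Finset.sum_sub_distrib]
  rw [split] at key
  linarith [key]

end Expand

lemma MutDet.pair_right {g : Ω → β} {g' : Ω → γ} (f : Ω → α) (h : MutDet g g') :
    MutDet (fun ω => (f ω, g ω)) (fun ω => (f ω, g' ω)) := by
  obtain ⟨⟨e, he⟩, ⟨e', he'⟩⟩ := h
  exact ⟨⟨fun x => (x.1, e x.2), fun ω => by simp [he ω]⟩,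
         ⟨fun x => (x.1, e' x.2), fun ω => by simp [he' ω]⟩⟩

lemma Hcond_congr_right {g : Ω → β} {g' : Ω → γ} (f : Ω → α) (h : MutDet g g') :
    Hcond p f g = Hcond p f g' := by
  unfold Hcond
  rw [Hent_congr_mutdet h, Hent_congr_mutdet (MutDet.pair_right f h)]

lemma Hcond_drop (hp : IsPMF p) (f : Ω → α) (g : Ω → β) (h : Ω → γ) :
    Hcond p f (fun ω => (g ω, h ω)) ≤ Hcond p f h := by
  have hs := Hent_submod f g h hp
  have e1 : Hent p (fun ω => (f ω, (fun ω => (g ω, h ω)) ω))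
      = Hent p (fun ω => (f ω, g ω, h ω)) := rfl
  simp only [Hcond, e1]
  linarith

lemma Hcond_condindep (hp : IsPMF p) {f : Ω → α} {g : Ω → β} {h : Ω → γ}
    (hci : CondIndepFun p f g h) :
    Hcond p f (fun ω => (g ω, h ω)) = Hcond p f h := by
  have hs := Hent_condindep f g h hp hci
  have e1 : Hent p (fun ω => (f ω, (fun ω => (g ω, h ω)) ω))
      = Hent p (fun ω => (f ω, g ω, h ω)) := rfl
  simp only [Hcond, e1]
  linarith

lemma Icond_formula (f : Ω → α) (g : Ω → β) (h : Ω → γ) :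
    Icond p f g h = Hcond p g h - Hcond p g (fun ω => (f ω, h ω)) := by
  have e1 : Hent p (fun ω => ((f ω, g ω), h ω))
      = Hent p (fun ω => (g ω, (f ω, h ω))) :=
    Hent_congr_mutdet ⟨⟨fun x => (x.1.2, (x.1.1, x.2)), fun ω => rfl⟩,
      ⟨fun x => ((x.2.1, x.1), x.2.2), fun ω => rfl⟩⟩
  simp only [Icond, Hcond] at *
  linarith

lemma Hent_indep (hp : IsPMF p) (f : Ω → α) (g : Ω → β)
    (hind : ∀ a b, prob p (fun ω => (f ω, g ω)) (a, b) = prob p f a * prob p g b) :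
    Hent p (fun ω => (f ω, g ω)) = Hent p f + Hent p g := by
  unfold Hent
  rw [Fintype.sum_prod_type]
  have step : ∀ a, ∑ b, prob p (fun ω => (f ω, g ω)) (a, b)
        * Real.logb 2 (prob p (fun ω => (f ω, g ω)) (a, b))
      = prob p f a * Real.logb 2 (prob p f a)
        + prob p f a * ∑ b, prob p g b * Real.logb 2 (prob p g b) := by
    intro a
    have pt : ∀ b, prob p (fun ω => (f ω, g ω)) (a, b)
        * Real.logb 2 (prob p (fun ω => (f ω, g ω)) (a, b))
        = prob p f a * prob p g b * Real.logb 2 (prob p f a)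
          + prob p f a * prob p g b * Real.logb 2 (prob p g b) := by
      intro b; rw [hind a b]
      exact mul_logb_mul _ _ (prob_nonneg hp.1 f a) (prob_nonneg hp.1 g b)
    rw [Finset.sum_congr rfl (fun b _ => pt b), Finset.sum_add_distrib]
    congr 1
    · have e1 : ∑ b, prob p f a * prob p g b * Real.logb 2 (prob p f a)
          = (prob p f a * Real.logb 2 (prob p f a)) * ∑ b, prob p g b := by
        rw [Finset.mul_sum]
        apply Finset.sum_congr rfl; intro b _; ring
      rw [e1, sum_prob hp g, mul_one]
    · rw [Finset.mul_sum]
      apply Finset.sum_congr rfl; intro b _; ring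
  have total : ∑ a, ∑ b, prob p (fun ω => (f ω, g ω)) (a, b)
        * Real.logb 2 (prob p (fun ω => (f ω, g ω)) (a, b))
      = (∑ a, prob p f a * Real.logb 2 (prob p f a))
        + (∑ a, prob p f a) * ∑ b, prob p g b * Real.logb 2 (prob p g b) := by
    rw [Finset.sum_congr rfl (fun a _ => step a), Finset.sum_add_distrib,
      ← Finset.sum_mul]
  rw [total, sum_prob hp f]
  ring

lemma Hent_uniform (hp : IsPMF p) (f : Ω → α)
    (hu : ∀ a, prob p f a = 1 / Fintype.card α) :
    Hent p f = Real.logb 2 (Fintype.card α) := by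
  have hcard : (Fintype.card α : ℝ) ≠ 0 := by
    intro h0
    have := sum_prob hp f
    rw [Finset.sum_congr rfl (fun a _ => hu a), Finset.sum_const, Finset.card_univ,
      nsmul_eq_mul, h0] at this
    simp at this
  unfold Hent
  rw [Finset.sum_congr rfl (fun a _ => by rw [hu a]), Finset.sum_const,
    Finset.card_univ, nsmul_eq_mul]
  rw [one_div, Real.logb_inv]
  field_simp

end RWD

open RWD in
/-- Second converse bound for the relay-without-delay channel (Theorem 3): with
`U_i = (Z^{i-1}, S^{i-1})`, `Z_i = z(X_i, S_i)` and `X_{r,i} = x_r(U_i, Z_i)`,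
if `(X_i, X_{r,i}, Z^{i-1}, S^{i-1})` is a function of `(M, S^n)`, the channel is
memoryless and Fano's bound holds, then
`nR ≤ ∑ I(U_i, X_i; Y_i | S_i) + n·ε_n`. -/
theorem relay_without_delay_converse_two
    {Ω 𝕄 𝒮 𝒳 𝒳r 𝒵 𝒴 : Type*} [Fintype Ω] [Fintype 𝕄] [Fintype 𝒮]
    [Fintype 𝒳] [Fintype 𝒳r] [Fintype 𝒵] [Fintype 𝒴]
    (p : Ω → ℝ) (hp : IsPMF p) (n : ℕ) (hn : 0 < n) (R eps : ℝ)
    (M : Ω → 𝕄) (S : Fin n → Ω → 𝒮) (X : Fin n → Ω → 𝒳)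
    (Xr : Fin n → Ω → 𝒳r) (Z : Fin n → Ω → 𝒵) (Y : Fin n → Ω → 𝒴)
    (hcard : (Fintype.card 𝕄 : ℝ) = 2 ^ ((n : ℝ) * R))
    (hMuniform : ∀ m, prob p M m = 1 / Fintype.card 𝕄)
    (hMindepS : ∀ m sv, prob p (fun ω => (M ω, fun i => S i ω)) (m, sv)
        = prob p M m * prob p (fun ω i => S i ω) sv)
    (hiid : ∃ q : 𝒮 → ℝ, (∀ s, 0 ≤ q s) ∧ (∑ s, q s = 1) ∧
        ∀ sv : Fin n → 𝒮, prob p (fun ω i => S i ω) sv = ∏ i, q (sv i))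
    (hZ : ∃ z : 𝒳 → 𝒮 → 𝒵, ∀ (i : Fin n) ω, Z i ω = z (X i ω) (S i ω))
    (hdet : ∀ i : Fin n, ∃ f : 𝕄 → (Fin n → 𝒮) →
        𝒳 × 𝒳r × ({j : Fin n // j < i} → 𝒵) × ({j : Fin n // j < i} → 𝒮),
        ∀ ω, (X i ω, Xr i ω, (fun j : {j : Fin n // j < i} => Z j.1 ω),
              (fun j : {j : Fin n // j < i} => S j.1 ω)) = f (M ω) (fun j => S j ω))
    (hXr : ∀ i : Fin n, ∃ xr :
        (({j : Fin n // j < i} → 𝒵) × ({j : Fin n // j < i} → 𝒮)) → 𝒵 → 𝒳r,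
        ∀ ω, Xr i ω = xr ((fun j : {j : Fin n // j < i} => Z j.1 ω),
                          (fun j : {j : Fin n // j < i} => S j.1 ω)) (Z i ω))
    (hmem : ∀ i : Fin n, CondIndepFun p (Y i)
        (fun ω => (M ω, fun j => S j ω, fun j : {j : Fin n // j < i} => Y j.1 ω))
        (fun ω => (X i ω, Xr i ω, S i ω)))
    (hFano : Hcond p M (fun ω => (fun i => Y i ω, fun i => S i ω)) ≤ n * eps) :
    (n : ℝ) * R ≤
      (∑ i : Fin n, Icond p
        (fun ω => ((fun j : {j : Fin n // j < i} => Z j.1 ω,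
                    fun j : {j : Fin n // j < i} => S j.1 ω), X i ω))
        (Y i) (S i)) + n * eps := by
  classical
  obtain ⟨zf, hzf⟩ := hZ
  -- the full state sequence
  set Sn : Ω → (Fin n → 𝒮) := fun ω j => S j ω with hSnd
  -- telescoping quantity
  set A : ℕ → ℝ := fun k => Hcond p M
    (fun ω => ((fun j : {j : Fin n // (j : ℕ) < k} => Y j.1 ω), Sn ω)) with hAd
  -- conditioning tuple at step i
  set G : (i : Fin n) → Ω → (({j : Fin n // j < i} → 𝒴) × (Fin n → 𝒮)) :=
    fun i ω => ((fun j : {j : Fin n // j < i} => Y j.1 ω), Sn ω) with hGd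
  -- (1) A 0 = H(M)
  have hA0 : A 0 = Hent p M := by
    have hmd : MutDet (Ω := Ω)
        (fun ω => ((fun j : {j : Fin n // (j : ℕ) < 0} => Y j.1 ω), Sn ω)) Sn := by
      refine ⟨⟨Prod.snd, fun ω => rfl⟩,
        ⟨fun sv => ((fun j => absurd j.2 (Nat.not_lt_zero _)), sv), fun ω => ?_⟩⟩
      refine Prod.ext ?_ rfl
      funext j
      exact absurd j.2 (Nat.not_lt_zero _)
    have h1 : A 0 = Hcond p M Sn := Hcond_congr_right M hmd
    have h2 : Hent p (fun ω => (M ω, Sn ω)) = Hent p M + Hent p Sn :=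
      Hent_indep hp M Sn (fun m sv => hMindepS m sv)
    rw [h1]
    unfold Hcond
    rw [h2]
    ring
  -- (2) A n ≤ n * eps
  have hAn : A n ≤ n * eps := by
    have hmd : MutDet (Ω := Ω)
        (fun ω => ((fun j : {j : Fin n // (j : ℕ) < n} => Y j.1 ω), Sn ω))
        (fun ω => ((fun i : Fin n => Y i ω), Sn ω)) := by
      refine ⟨⟨fun x => ((fun i => x.1 ⟨i, i.2⟩), x.2), fun ω => rfl⟩,
        ⟨fun x => ((fun j => x.1 j.1), x.2), fun ω => rfl⟩⟩
    have := Hcond_congr_right (p := p) M hmd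
    rw [hAd] at *
    simp only at this ⊢
    rw [this]
    exact hFano
  -- (3) telescoping step identity
  have hstep : ∀ i : Fin n, A i.1 - A (i.1 + 1)
      = Hcond p (Y i) (G i) - Hcond p (Y i) (fun ω => (M ω, G i ω)) := by
    intro i
    have c2 : Hent p (fun ω => ((fun j : {j : Fin n // (j : ℕ) < i.1 + 1} => Y j.1 ω), Sn ω))
        = Hent p (fun ω => (Y i ω, G i ω)) := by
      apply Hent_congr_mutdet
      constructor
      · refine ⟨fun x => (x.1 ⟨i, Nat.lt_succ_self _⟩,
          ((fun j : {j : Fin n // j < i} => x.1 ⟨j.1, Nat.lt_succ_of_lt j.2⟩), x.2)),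
          fun ω => rfl⟩
      · refine ⟨fun x => ((fun j => if h : (j.1 : Fin n) < i then x.2.1 ⟨j.1, h⟩ else x.1),
          x.2.2), fun ω => ?_⟩
        refine Prod.ext ?_ rfl
        funext j
        by_cases h : (j.1 : Fin n) < i
        · simp [hGd, h]
        · have hj : j.1 = i := by
            apply Fin.ext
            have := j.2
            have h' : ¬ (j.1 : ℕ) < (i : ℕ) := h
            omega
          simp [hGd, h, hj]
    have c1 : Hent p (fun ω => (M ω,
          ((fun j : {j : Fin n // (j : ℕ) < i.1 + 1} => Y j.1 ω), Sn ω)))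
        = Hent p (fun ω => (Y i ω, (M ω, G i ω))) := by
      apply Hent_congr_mutdet
      constructor
      · refine ⟨fun x => (x.2.1 ⟨i, Nat.lt_succ_self _⟩,
          (x.1, ((fun j : {j : Fin n // j < i} => x.2.1 ⟨j.1, Nat.lt_succ_of_lt j.2⟩), x.2.2))),
          fun ω => rfl⟩
      · refine ⟨fun x => (x.2.1,
          ((fun j => if h : (j.1 : Fin n) < i then x.2.2.1 ⟨j.1, h⟩ else x.1), x.2.2.2)),
          fun ω => ?_⟩
        refine Prod.ext rfl (Prod.ext ?_ rfl)
        funext j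
        by_cases h : (j.1 : Fin n) < i
        · simp [hGd, h]
        · have hj : j.1 = i := by
            apply Fin.ext
            have := j.2
            have h' : ¬ (j.1 : ℕ) < (i : ℕ) := h
            omega
          simp [hGd, h, hj]
    have c0 : Hent p (fun ω => ((fun j : {j : Fin n // (j : ℕ) < i.1} => Y j.1 ω), Sn ω))
        = Hent p (G i) := rfl
    have c0' : Hent p (fun ω => (M ω,
          ((fun j : {j : Fin n // (j : ℕ) < i.1} => Y j.1 ω), Sn ω)))
        = Hent p (fun ω => (M ω, G i ω)) := rfl
    simp only [hAd, Hcond]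
    linarith [c0, c0', c1, c2]
  -- (4) per-step bound
  have hbound : ∀ i : Fin n,
      Hcond p (Y i) (G i) - Hcond p (Y i) (fun ω => (M ω, G i ω))
      ≤ Icond p (fun ω => ((fun j : {j : Fin n // j < i} => Z j.1 ω,
          fun j : {j : Fin n // j < i} => S j.1 ω), X i ω)) (Y i) (S i) := by
    intro i
    set UX : Ω → (({j : Fin n // j < i} → 𝒵) × ({j : Fin n // j < i} → 𝒮)) × 𝒳 :=
      fun ω => ((fun j : {j : Fin n // j < i} => Z j.1 ω,
        fun j : {j : Fin n // j < i} => S j.1 ω), X i ω) with hUXd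
    set V : Ω → 𝒳 × 𝒳r × 𝒮 := fun ω => (X i ω, Xr i ω, S i ω) with hVd
    -- (4a)
    have h4a : Hcond p (Y i) (G i) ≤ Hcond p (Y i) (S i) := by
      have hmd : MutDet (Ω := Ω) (G i) (fun ω => (G i ω, S i ω)) :=
        ⟨⟨fun x => (x, x.2 i), fun ω => rfl⟩, ⟨Prod.fst, fun ω => rfl⟩⟩
      rw [Hcond_congr_right (Y i) hmd]
      exact Hcond_drop hp (Y i) (G i) (S i)
    -- (4b)
    have h4b : Hcond p (Y i) (fun ω => (M ω, G i ω)) = Hcond p (Y i) V := by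
      obtain ⟨fd, hfd⟩ := hdet i
      have hmd : MutDet (Ω := Ω) (fun ω => (M ω, G i ω))
          (fun ω => ((M ω, fun j => S j ω, fun j : {j : Fin n // j < i} => Y j.1 ω), V ω)) := by
        constructor
        · refine ⟨fun x => ((x.1, x.2.2, x.2.1),
            ((fd x.1 x.2.2).1, (fd x.1 x.2.2).2.1, x.2.2 i)), fun ω => ?_⟩
          have hx : X i ω = (fd (M ω) (fun j => S j ω)).1 :=
            congrArg Prod.fst (hfd ω)
          have hxr : Xr i ω = (fd (M ω) (fun j => S j ω)).2.1 :=
            congrArg (fun t => t.2.1) (hfd ω)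
          simp only [hVd, hGd, hSnd]
          exact Prod.ext rfl (Prod.ext hx (Prod.ext hxr rfl))
        · exact ⟨fun x => (x.1.1, (x.1.2.2, x.1.2.1)), fun ω => rfl⟩
      rw [Hcond_congr_right (Y i) hmd]
      exact Hcond_condindep hp (hmem i)
    -- (4c)
    have h4c : Hcond p (Y i) (fun ω => (UX ω, S i ω)) ≤ Hcond p (Y i) V := by
      obtain ⟨xrf, hxrf⟩ := hXr i
      have hmd : MutDet (Ω := Ω) (fun ω => (UX ω, S i ω))
          (fun ω => ((UX ω, S i ω), V ω)) := by
        constructor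
        · refine ⟨fun x => (x, (x.1.2, xrf x.1.1 (zf x.1.2 x.2), x.2)), fun ω => ?_⟩
          simp only [hVd, hUXd]
          rw [hxrf ω, hzf i ω]
        · exact ⟨Prod.fst, fun ω => rfl⟩
      rw [Hcond_congr_right (Y i) hmd]
      exact Hcond_drop hp (Y i) (fun ω => (UX ω, S i ω)) V
    -- (4d)
    have h4d : Icond p UX (Y i) (S i)
        = Hcond p (Y i) (S i) - Hcond p (Y i) (fun ω => (UX ω, S i ω)) :=
      Icond_formula UX (Y i) (S i)
    linarith [h4a, h4b, h4c, h4d]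
  -- (5) assembly
  have htel : ∑ i ∈ Finset.range n, (A i - A (i + 1)) = A 0 - A n :=
    Finset.sum_range_sub' A n
  have hsum : ∑ i : Fin n, (A i.1 - A (i.1 + 1))
      = ∑ i ∈ Finset.range n, (A i - A (i + 1)) :=
    Fin.sum_univ_eq_sum_range (fun k => A k - A (k + 1)) n
  have hle : A 0 - A n ≤ ∑ i : Fin n, Icond p
      (fun ω => ((fun j : {j : Fin n // j < i} => Z j.1 ω,
        fun j : {j : Fin n // j < i} => S j.1 ω), X i ω)) (Y i) (S i) := by
    rw [← htel, ← hsum]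
    apply Finset.sum_le_sum
    intro i _
    rw [hstep i]
    exact hbound i
  have hnR : (n : ℝ) * R = Hent p M := by
    have h2 : (0 : ℝ) < 2 := by norm_num
    rw [Hent_uniform hp M hMuniform, hcard, Real.logb_rpow h2 (by norm_num)]
  linarith [hA0, hAn, hle, hnR]



end
end
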